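/- arXiv:1809.09509 — 5 statements merged into one kernel-verified Lean document; each statement's English description precedes it below -/
import Mathlib

section
/- Let (X,T₁,…,T_d) be a minimal ℤ^d-system. Then the action of the group 𝒢_{T₁,…,T_d} on Q_{T₁,…,T_d}(X) is minimal, i.e., every 𝒢_{T₁,…,T_d}-orbit of a point of Q_{T₁,…,T_d}(X) is dense in Q_{T₁,…,T_d}(X). If moreover (X,T₁,…,T_d) is distal, then the action of 𝒢_{T₁,…,T_d} on Q_{T₁,…,T_d}(X) is distal. -/
/-!
Every element of `𝒢` acts coordinatewise by elements of `G`, which gives distality at once.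

Since the `Tᵢ` commute, an element of `𝒢` acts at the vertex `ε` as `g ∘ T^{ε·n}` for some
`g ∈ G` and `n ∈ ℤ^d`, and minimality is proved by adding the directions one at a time.
Splitting a cube along a new direction `K` into its two faces maps the cubes built on `s ∪ {K}`
into the closure of the pairs `(z, t^c z)`, `z` a cube built on `s` and `t = T_K^{[d]}`, and the
larger group onto the group generated by the diagonal action of the smaller one and `id × t`.
Such pair systems are minimal: by a Baire category argument a generic `w` has its fibre
`{v | (w, v) ∈ closure}` inside the closure of its `t`-orbit, which moves the orbit closure of
any pair onto a diagonal point `(w', w')`, and minimality of the smaller system spreads that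
over all pairs `(z, t^c z)`.
-/

open Function Set

/-- The group of self-homeomorphisms of a topological space, under composition. -/
instance homeomorphGroup {X : Type*} [TopologicalSpace X] : Group (X ≃ₜ X) where
  mul f g := g.trans f
  one := Homeomorph.refl X
  inv := Homeomorph.symm
  mul_assoc _ _ _ := rfl
  one_mul _ := Homeomorph.ext fun _ => rfl
  mul_one _ := Homeomorph.ext fun _ => rfl
  inv_mul_cancel f := Homeomorph.self_trans_symm f

variable {d : ℕ}

/-- The homeomorphism `T₁^{n₁ε₁} ⋯ T_d^{n_dε_d}` associated with `n ∈ ℤ^d` and a vertex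
`ε ∈ {0,1}^d` of the cube. -/
def cubeMap {X : Type*} [TopologicalSpace X] (T : Fin d → X ≃ₜ X)
    (n : Fin d → ℤ) (ε : Fin d → Bool) : X ≃ₜ X :=
  ((List.finRange d).map (fun i => T i ^ (if ε i then n i else 0))).prod

/-- The space of directional dynamical cubes `Q_{T₁,…,T_d}(X)`. -/
def cubes {X : Type*} [TopologicalSpace X] (T : Fin d → X ≃ₜ X) :
    Set ((Fin d → Bool) → X) :=
  closure {y | ∃ (x : X) (n : Fin d → ℤ), ∀ ε, y ε = cubeMap T n ε x}

/-- The group of homeomorphisms generated by `T₁,…,T_d`. -/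
def genGroup {X : Type*} [TopologicalSpace X] (T : Fin d → X ≃ₜ X) : Subgroup (X ≃ₜ X) :=
  Subgroup.closure (Set.range T)

/-- Minimality: every orbit is dense. -/
def IsMinimalSystem {X : Type*} [TopologicalSpace X] (T : Fin d → X ≃ₜ X) : Prop :=
  ∀ x : X, Dense {y : X | ∃ g ∈ genGroup T, g x = y}

/-- Distality: `inf_{g ∈ G} dist (g x) (g y) > 0` whenever `x ≠ y`. -/
def IsDistalSystem {X : Type*} [MetricSpace X] (T : Fin d → X ≃ₜ X) : Prop :=
  ∀ x y : X, x ≠ y → ∃ δ > 0, ∀ g ∈ genGroup T, δ ≤ dist (g x) (g y)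

/-- The face transformation `T_j^{[d]}` of the cube space. -/
def faceHomeo {X : Type*} [TopologicalSpace X] (T : Fin d → X ≃ₜ X) (i : Fin d) :
    ((Fin d → Bool) → X) ≃ₜ ((Fin d → Bool) → X) :=
  Homeomorph.piCongrRight fun ε => if ε i then T i else Homeomorph.refl X

/-- The diagonal transformation `g^{[d]}` of the cube space. -/
def diagHomeo {X : Type*} [TopologicalSpace X] (d : ℕ) (g : X ≃ₜ X) :
    ((Fin d → Bool) → X) ≃ₜ ((Fin d → Bool) → X) :=
  Homeomorph.piCongrRight fun _ => g

/-- The group `𝒢_{T₁,…,T_d}`, generated by the face transformations together with the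
diagonal transformations `g^{[d]}`, `g ∈ G`. -/
def cubeGroup {X : Type*} [TopologicalSpace X] (T : Fin d → X ≃ₜ X) :
    Subgroup (((Fin d → Bool) → X) ≃ₜ ((Fin d → Bool) → X)) :=
  Subgroup.closure
    ({h | ∃ i : Fin d, h = faceHomeo T i} ∪ {h | ∃ g ∈ genGroup T, h = diagHomeo d g})

theorem BaireSpace.exists_forall_mem_of_mem_closure {Y ι : Type*} [TopologicalSpace Y]
    [BaireSpace Y] [Nonempty Y] [Countable ι] {E : ι → Set Y} (hE : ∀ i, IsOpen (E i)) :
    ∃ y, ∀ i, y ∈ closure (E i) → y ∈ E i := by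
  obtain ⟨y, hy⟩ := (dense_iInter_of_isOpen (fun i => (hE i).isLocallyClosed.isOpen_coborder)
    fun i => dense_coborder).nonempty
  exact ⟨y, fun i hi => coborder_inter_closure (s := E i) ▸ ⟨mem_iInter.1 hy i, hi⟩⟩

section PairDynamics

variable {Z : Type*} [TopologicalSpace Z]

def orbitOf (H : Subgroup (Z ≃ₜ Z)) (z : Z) : Set Z := {w | ∃ h ∈ H, h z = w}

def IsMinimalOn (H : Subgroup (Z ≃ₜ Z)) (Y : Set Z) : Prop :=
  ∀ y ∈ Y, Y ⊆ closure (orbitOf H y)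

def zpowPairs (t : Z ≃ₜ Z) (Y : Set Z) : Set (Z × Z) :=
  {p | ∃ z ∈ Y, ∃ c : ℤ, (z, (t ^ c) z) = p}

/-- The orbit of `v` under the group generated by the diagonal action of `S` and by `id × t`. -/
def pairOrbit (S : Subgroup (Z ≃ₜ Z)) (t : Z ≃ₜ Z) (v : Z × Z) : Set (Z × Z) :=
  {p | ∃ a ∈ S, ∃ c : ℤ, (a v.1, (a * t ^ c) v.2) = p}

theorem exists_forall_mem_closure_orbit_of_mem_closure_zpowPairs [SecondCountableTopology Z]
    (t : Z ≃ₜ Z) {Y : Set Z} [BaireSpace Y] (hY : Y.Nonempty) :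
    ∃ w ∈ Y, ∀ v, (w, v) ∈ closure (zpowPairs t Y) →
      v ∈ closure (range fun c : ℤ => (t ^ c) w) := by
  have := hY.to_subtype
  let B := TopologicalSpace.countableBasis Z
  have : Countable B := (TopologicalSpace.countable_countableBasis Z).to_subtype
  let E : B → Set Y := fun U => {z | ∃ c : ℤ, (t ^ c) z ∈ (U : Set Z)}
  have hE : ∀ U, IsOpen (E U) := fun U => by
    simp only [E, Set.ofPred_exists]
    exact isOpen_iUnion fun c => (TopologicalSpace.isOpen_of_mem_countableBasis U.2).preimage
      ((t ^ c).continuous.comp continuous_subtype_val)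
  obtain ⟨w, hw⟩ := BaireSpace.exists_forall_mem_of_mem_closure hE
  refine ⟨w, w.2, fun v hv => ?_⟩
  by_contra hvw
  obtain ⟨U, hUB, hvU, hU⟩ := (TopologicalSpace.isBasis_countableBasis Z).mem_nhds_iff.1
    (isClosed_closure.isOpen_compl.mem_nhds hvw)
  -- the `t`-orbit of `w` misses `U ∋ v`, yet `w` is a limit of points whose orbits meet `U`
  suffices w ∈ closure (E ⟨U, hUB⟩) by
    obtain ⟨c, hc⟩ := hw _ this
    exact hU hc (subset_closure ⟨c, rfl⟩)
  rw [closure_subtype, mem_closure_iff]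
  intro O hO hwO
  obtain ⟨_, ⟨hzO, hzU⟩, z, hz, c, rfl⟩ := mem_closure_iff.1 hv _ (hO.prod
    (TopologicalSpace.isOpen_of_mem_countableBasis hUB)) ⟨hwO, hvU⟩
  exact ⟨z, hzO, ⟨z, hz⟩, ⟨c, hzU⟩, rfl⟩

theorem mapsTo_closure_zpowPairs {S : Subgroup (Z ≃ₜ Z)} {t : Z ≃ₜ Z}
    (hcomm : ∀ a ∈ S, Commute a t) {Y : Set Z} (hYS : ∀ a ∈ S, MapsTo a Y Y)
    {b : Z ≃ₜ Z} (hb : b ∈ S) (e : ℤ) :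
    MapsTo (Prod.map b (b * t ^ e)) (closure (zpowPairs t Y)) (closure (zpowPairs t Y)) := by
  refine MapsTo.closure ?_ (b.continuous.prodMap (b * t ^ e).continuous)
  rintro _ ⟨z, hz, c, rfl⟩
  refine ⟨b z, hYS b hb hz, e + c, Prod.ext rfl ?_⟩
  have : (b * t ^ e) * t ^ c = t ^ (e + c) * b := by
    rw [mul_assoc, ← zpow_add, ((hcomm b hb).zpow_right _).eq]
  exact (DFunLike.congr_fun this z).symm

theorem mapsTo_closure_pairOrbit {S : Subgroup (Z ≃ₜ Z)} {t : Z ≃ₜ Z}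
    (hcomm : ∀ a ∈ S, Commute a t) (v : Z × Z) {b : Z ≃ₜ Z} (hb : b ∈ S) (e : ℤ) :
    MapsTo (Prod.map b (b * t ^ e)) (closure (pairOrbit S t v)) (closure (pairOrbit S t v)) := by
  refine MapsTo.closure ?_ (b.continuous.prodMap (b * t ^ e).continuous)
  rintro _ ⟨a, ha, c, rfl⟩
  refine ⟨b * a, mul_mem hb ha, e + c, Prod.ext rfl ?_⟩
  have : (b * a) * t ^ (e + c) = (b * t ^ e) * (a * t ^ c) := by
    rw [zpow_add, mul_assoc, ← mul_assoc a, ((hcomm a ha).zpow_right e).eq]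
    simp only [mul_assoc]
  exact DFunLike.congr_fun this v.2

theorem closure_zpowPairs_subset_closure_pairOrbit [CompactSpace Z] [T2Space Z]
    [SecondCountableTopology Z] {S : Subgroup (Z ≃ₜ Z)} {t : Z ≃ₜ Z} (ht : t ∈ S)
    (hcomm : ∀ a ∈ S, Commute a t) {Y : Set Z} (hY : IsClosed Y)
    (hYS : ∀ a ∈ S, MapsTo a Y Y) (hmin : IsMinimalOn S Y) {v : Z × Z}
    (hv : v ∈ closure (zpowPairs t Y)) :
    closure (zpowPairs t Y) ⊆ closure (pairOrbit S t v) := by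
  set M := closure (pairOrbit S t v)
  have hpairs : closure (zpowPairs t Y) ⊆ Y ×ˢ Y := by
    refine closure_minimal ?_ (hY.prod hY)
    rintro _ ⟨z, hz, c, rfl⟩
    exact ⟨hz, hYS _ (zpow_mem ht c) hz⟩
  have hMpairs : M ⊆ closure (zpowPairs t Y) := by
    refine closure_minimal ?_ isClosed_closure
    rintro _ ⟨a, ha, c, rfl⟩
    exact mapsTo_closure_zpowPairs hcomm hYS ha c hv
  have : CompactSpace Y := isCompact_iff_compactSpace.1 hY.isCompact
  obtain ⟨w, hwY, hw⟩ :=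
    exists_forall_mem_closure_orbit_of_mem_closure_zpowPairs t ⟨v.1, (hpairs hv).1⟩
  -- `Prod.fst '' M` is closed and contains the `S`-orbit of `v.1`, hence all of `Y`
  obtain ⟨⟨_, w'⟩, hww', rfl⟩ : w ∈ Prod.fst '' M := by
    refine closure_minimal ?_ (isClosed_closure.isCompact.image continuous_fst).isClosed
      (hmin v.1 (hpairs hv).1 hwY)
    rintro _ ⟨a, ha, rfl⟩
    exact ⟨_, subset_closure ⟨a, ha, 0, rfl⟩, rfl⟩
  have hw'w' : (w', w') ∈ M := by
    refine MapsTo.closure_left (f := fun u => (u, w')) ?_ (by fun_prop) isClosed_closure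
      (hw w' (hMpairs hww'))
    rintro _ ⟨c, rfl⟩
    -- `(t ^ c w, w')` is the image of `(w, w')` under `t ^ c × t ^ c * t ^ (-c)`
    simpa using mapsTo_closure_pairOrbit hcomm v (zpow_mem ht c) (-c) hww'
  refine closure_minimal ?_ isClosed_closure
  rintro _ ⟨z, hz, c, rfl⟩
  refine MapsTo.closure_left (f := fun u => (u, (t ^ c) u)) ?_ (by fun_prop) isClosed_closure
    (hmin w' (hpairs (hMpairs hw'w')).2 hz)
  rintro _ ⟨a, ha, rfl⟩
  simpa [((hcomm a ha).zpow_right c).eq] using mapsTo_closure_pairOrbit hcomm v ha c hw'w'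

end PairDynamics

open scoped IsMulCommutative

section CubeGroup

variable {X : Type*} [TopologicalSpace X] (T : Fin d → X ≃ₜ X)

theorem isMulCommutative_genGroup (hcomm : ∀ i j : Fin d, ∀ x : X, T i (T j x) = T j (T i x)) :
    IsMulCommutative (genGroup T) :=
  Subgroup.isMulCommutative_closure <| by
    rintro _ ⟨i, rfl⟩ _ ⟨j, rfl⟩
    exact Homeomorph.ext (hcomm i j)

def genGroup.gen (i : Fin d) : genGroup T := ⟨T i, Subgroup.subset_closure ⟨i, rfl⟩⟩

/-- The exponent vector `ε · n` of `T` at the vertex `ε` of the cube with edge lengths `n`. -/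
def mask (ε : Fin d → Bool) (n : Fin d → ℤ) : Fin d → ℤ :=
  fun i => if ε i then n i else 0

theorem mask_add (ε : Fin d → Bool) (n m : Fin d → ℤ) :
    mask ε (n + m) = mask ε n + mask ε m := by
  ext i; by_cases h : ε i <;> simp [mask, h]

theorem mask_zero (ε : Fin d → Bool) : mask ε 0 = 0 := by
  ext i; simp [mask]

theorem mask_single (ε : Fin d → Bool) (K : Fin d) (c : ℤ) :
    mask ε (Pi.single K c) = Pi.single K (if ε K then c else 0) := by
  ext i
  rcases eq_or_ne i K with rfl | hi <;> simp [mask, *]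

theorem mask_update (ε : Fin d → Bool) (n : Fin d → ℤ) (K : Fin d) (b : Bool) :
    mask (update ε K b) n = mask ε (update n K 0) + Pi.single K (if b then n K else 0) := by
  ext i
  rcases eq_or_ne i K with rfl | hi <;> simp [mask, *]

variable [IsMulCommutative (genGroup T)]

/-- `T^m = T₁^{m₁} ⋯ T_d^{m_d}`, computed in the commutative group `genGroup T`. -/
def genPow (m : Fin d → ℤ) : genGroup T := ∏ i, genGroup.gen T i ^ m i

theorem genPow_add (m m' : Fin d → ℤ) : genPow T (m + m') = genPow T m * genPow T m' := by
  simp only [genPow, Pi.add_apply, zpow_add, Finset.prod_mul_distrib]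

theorem genPow_zero : genPow T 0 = 1 := by simp [genPow]

theorem genPow_single (K : Fin d) (c : ℤ) :
    genPow T (Pi.single K c) = genGroup.gen T K ^ c := by
  rw [genPow, Finset.prod_eq_single K (fun i _ hi => by simp [hi]) (by simp)]
  simp

theorem cubeMap_eq_genPow (n : Fin d → ℤ) (ε : Fin d → Bool) :
    cubeMap T n ε = (genPow T (mask ε n) : X ≃ₜ X) := by
  rw [cubeMap, genPow, Fin.prod_univ_def, Subgroup.val_list_prod, List.map_map]
  rfl

def cubeHomeo (g : genGroup T) (n : Fin d → ℤ) :
    ((Fin d → Bool) → X) ≃ₜ ((Fin d → Bool) → X) :=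
  Homeomorph.piCongrRight fun ε => ((g * genPow T (mask ε n) : genGroup T) : X ≃ₜ X)

@[simp]
theorem cubeHomeo_apply (g : genGroup T) (n : Fin d → ℤ) (y : (Fin d → Bool) → X)
    (ε : Fin d → Bool) :
    cubeHomeo T g n y ε = ((g * genPow T (mask ε n) : genGroup T) : X ≃ₜ X) (y ε) :=
  rfl

theorem cubeHomeo_mul (g g' : genGroup T) (n n' : Fin d → ℤ) :
    cubeHomeo T g n * cubeHomeo T g' n' = cubeHomeo T (g * g') (n + n') := by
  ext y ε
  simp only [cubeHomeo_apply, Homeomorph.mul_apply]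
  rw [mask_add, genPow_add, mul_mul_mul_comm g]
  rfl

theorem cubeHomeo_one : cubeHomeo T 1 0 = 1 := by
  ext y ε
  simp [mask_zero, genPow_zero]

theorem cubeHomeo_inv (g : genGroup T) (n : Fin d → ℤ) :
    (cubeHomeo T g n)⁻¹ = cubeHomeo T g⁻¹ (-n) := by
  rw [inv_eq_iff_mul_eq_one, cubeHomeo_mul, mul_inv_cancel, add_neg_cancel, cubeHomeo_one]

theorem cubeHomeo_zero (g : genGroup T) : cubeHomeo T g 0 = diagHomeo d g := by
  ext y ε
  simp [mask_zero, genPow_zero, diagHomeo]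

theorem faceHomeo_eq_cubeHomeo (i : Fin d) :
    faceHomeo T i = cubeHomeo T 1 (Pi.single i 1) := by
  ext y ε
  rcases hε : ε i <;> simp [faceHomeo, mask_single, hε, genPow_single, genPow_zero, genGroup.gen]

theorem commute_cubeHomeo (g g' : genGroup T) (n n' : Fin d → ℤ) :
    Commute (cubeHomeo T g n) (cubeHomeo T g' n') := by
  rw [Commute, SemiconjBy, cubeHomeo_mul, cubeHomeo_mul, mul_comm g, add_comm n]

theorem cubeHomeo_one_mem_cubeGroup (n : Fin d → ℤ) : cubeHomeo T 1 n ∈ cubeGroup T := by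
  let faces : AddSubgroup (Fin d → ℤ) :=
    { carrier := {n | cubeHomeo T 1 n ∈ cubeGroup T}
      add_mem' := fun {n n'} (hn : cubeHomeo T 1 n ∈ cubeGroup T)
          (hn' : cubeHomeo T 1 n' ∈ cubeGroup T) => by
        simpa [cubeHomeo_mul] using mul_mem hn hn'
      zero_mem' := by simp [cubeHomeo_one, one_mem]
      neg_mem' := fun {n} (hn : cubeHomeo T 1 n ∈ cubeGroup T) => by
        simpa [cubeHomeo_inv] using inv_mem hn }
  change n ∈ faces
  rw [← Finset.univ_sum_single n]
  refine sum_mem fun i _ => ?_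
  rw [show Pi.single i (n i) = n i • (Pi.single i 1 : Fin d → ℤ) by simp [← Pi.single_smul]]
  refine zsmul_mem ?_ _
  change cubeHomeo T 1 (Pi.single i 1) ∈ cubeGroup T
  exact faceHomeo_eq_cubeHomeo T i ▸ Subgroup.subset_closure (.inl ⟨i, rfl⟩)

/-- The subgroup of `cubeGroup T` generated by the diagonal transformations and the face
transformations in the directions of `s`. -/
def cubeGroupOn (s : Finset (Fin d)) :
    Subgroup (((Fin d → Bool) → X) ≃ₜ ((Fin d → Bool) → X)) where
  carrier := {h | ∃ g n, (∀ i ∉ s, n i = 0) ∧ cubeHomeo T g n = h}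
  mul_mem' := by
    rintro _ _ ⟨g, n, hn, rfl⟩ ⟨g', n', hn', rfl⟩
    exact ⟨g * g', n + n', fun i hi => by simp [hn i hi, hn' i hi],
      (cubeHomeo_mul T g g' n n').symm⟩
  one_mem' := ⟨1, 0, fun _ _ => rfl, cubeHomeo_one T⟩
  inv_mem' := by
    rintro _ ⟨g, n, hn, rfl⟩
    exact ⟨g⁻¹, -n, fun i hi => by simp [hn i hi], (cubeHomeo_inv T g n).symm⟩

theorem cubeHomeo_mem_cubeGroupOn {s : Finset (Fin d)} (g : genGroup T) {n : Fin d → ℤ}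
    (hn : ∀ i ∉ s, n i = 0) : cubeHomeo T g n ∈ cubeGroupOn T s :=
  ⟨g, n, hn, rfl⟩

theorem diagHomeo_mem_cubeGroupOn (s : Finset (Fin d)) (g : genGroup T) :
    diagHomeo d g ∈ cubeGroupOn T s :=
  cubeHomeo_zero T g ▸ cubeHomeo_mem_cubeGroupOn T g fun _ _ => rfl

theorem cubeGroup_eq_cubeGroupOn_univ : cubeGroup T = cubeGroupOn T Finset.univ := by
  refine le_antisymm (Subgroup.closure_le _ |>.2 ?_) ?_
  · rintro _ (⟨i, rfl⟩ | ⟨g, hg, rfl⟩)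
    · exact faceHomeo_eq_cubeHomeo T i ▸ cubeHomeo_mem_cubeGroupOn T 1 (by simp)
    · exact diagHomeo_mem_cubeGroupOn T _ ⟨g, hg⟩
  · rintro _ ⟨g, n, -, rfl⟩
    rw [← mul_one g, ← zero_add n, ← cubeHomeo_mul, cubeHomeo_zero]
    exact mul_mem (Subgroup.subset_closure (.inr ⟨g, g.2, rfl⟩))
      (cubeHomeo_one_mem_cubeGroup T n)

def cubesOn (s : Finset (Fin d)) : Set ((Fin d → Bool) → X) :=
  closure (⋃ x : X, orbitOf (cubeGroupOn T s) fun _ => x)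

theorem cubes_eq_cubesOn_univ : cubes T = cubesOn T Finset.univ := by
  rw [cubes, cubesOn]
  congr 1
  ext y
  simp only [Set.mem_iUnion, orbitOf, Set.mem_ofPred_eq]
  constructor
  · rintro ⟨x, n, hy⟩
    refine ⟨x, _, cubeHomeo_mem_cubeGroupOn T 1 (n := n) (by simp), funext fun ε => ?_⟩
    simp [hy, cubeMap_eq_genPow]
  · rintro ⟨x, _, ⟨g, n, -, rfl⟩, rfl⟩
    refine ⟨(g : X ≃ₜ X) x, n, fun ε => ?_⟩
    rw [cubeMap_eq_genPow, cubeHomeo_apply, mul_comm]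
    rfl

theorem mapsTo_cubesOn {s : Finset (Fin d)}
    {h : ((Fin d → Bool) → X) ≃ₜ ((Fin d → Bool) → X)}
    (hh : h ∈ cubeGroupOn T s) : MapsTo h (cubesOn T s) (cubesOn T s) := by
  refine MapsTo.closure ?_ h.continuous
  rintro _ ⟨_, ⟨x, rfl⟩, h', hh', rfl⟩
  exact mem_iUnion.2 ⟨x, h * h', mul_mem hh hh', rfl⟩

theorem isMinimalOn_cubesOn_empty [T2Space X] (hmin : IsMinimalSystem T) :
    IsMinimalOn (cubeGroupOn T ∅) (cubesOn T ∅) := by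
  have hclosed : IsClosed {y : (Fin d → Bool) → X | ∀ ε, y ε = y fun _ => false} := by
    simp only [Set.ofPred_forall]
    exact isClosed_iInter fun ε => isClosed_eq (continuous_apply ε) (continuous_apply _)
  have hconst : cubesOn T ∅ ⊆ {y | ∀ ε, y ε = y fun _ => false} := by
    refine closure_minimal ?_ hclosed
    rintro _ ⟨_, ⟨x, rfl⟩, _, ⟨g, n, hn, rfl⟩, rfl⟩ ε
    have hn0 : n = 0 := funext fun i => hn i (Finset.notMem_empty i)
    simp [hn0, mask_zero]
  intro y hy z hz
  rw [funext (hconst hz), funext (hconst hy)]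
  refine map_mem_closure (f := fun x _ => x) (continuous_pi fun _ => continuous_id)
    (hmin (y fun _ => false) _) ?_
  rintro _ ⟨g, hg, rfl⟩
  exact ⟨diagHomeo d g, diagHomeo_mem_cubeGroupOn T ∅ ⟨g, hg⟩, rfl⟩

end CubeGroup

section Splitting

variable {X : Type*}

def faceSplit (K : Fin d) (y : (Fin d → Bool) → X) :
    ((Fin d → Bool) → X) × ((Fin d → Bool) → X) :=
  (fun ε => y (update ε K false), fun ε => y (update ε K true))

theorem faceSplit_injective (K : Fin d) : Injective (faceSplit (X := X) K) := by
  intro y y' h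
  ext ε
  rcases hε : ε K
  · simpa [faceSplit, ← hε] using congrFun (congrArg Prod.fst h) ε
  · simpa [faceSplit, ← hε] using congrFun (congrArg Prod.snd h) ε

variable [TopologicalSpace X]

theorem continuous_faceSplit (K : Fin d) : Continuous (faceSplit (X := X) K) := by
  unfold faceSplit; fun_prop

def diagHomeoHom :
    (X ≃ₜ X) →* (((Fin d → Bool) → X) ≃ₜ ((Fin d → Bool) → X)) where
  toFun := diagHomeo d
  map_one' := rfl
  map_mul' _ _ := rfl

theorem diagHomeo_zpow (g : X ≃ₜ X) (c : ℤ) : diagHomeo d g ^ c = diagHomeo d (g ^ c) :=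
  (map_zpow diagHomeoHom g c).symm

variable (T : Fin d → X ≃ₜ X) [IsMulCommutative (genGroup T)]

theorem commute_diagHomeo {s : Finset (Fin d)}
    {a : ((Fin d → Bool) → X) ≃ₜ ((Fin d → Bool) → X)}
    (ha : a ∈ cubeGroupOn T s) (g : genGroup T) : Commute a (diagHomeo d g) := by
  obtain ⟨g', n, -, rfl⟩ := ha
  exact cubeHomeo_zero T g ▸ commute_cubeHomeo T _ _ _ _

theorem cubeHomeo_mul_diagHomeo_zpow (g : genGroup T) (n : Fin d → ℤ) (K : Fin d) (c : ℤ) :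
    cubeHomeo T g n * diagHomeo d (T K) ^ c = cubeHomeo T (g * genGroup.gen T K ^ c) n := by
  rw [diagHomeo_zpow, show T K ^ c = ((genGroup.gen T K ^ c : genGroup T) : X ≃ₜ X) from rfl,
    ← cubeHomeo_zero, cubeHomeo_mul, add_zero]

theorem faceSplit_cubeHomeo (K : Fin d) (g : genGroup T) (n : Fin d → ℤ)
    (y : (Fin d → Bool) → X) :
    faceSplit K (cubeHomeo T g n y) =
      (cubeHomeo T g (update n K 0) (faceSplit K y).1,
        (cubeHomeo T g (update n K 0) * diagHomeo d (T K) ^ n K) (faceSplit K y).2) := by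
  rw [cubeHomeo_mul_diagHomeo_zpow]
  refine Prod.ext (funext fun ε => ?_) (funext fun ε => ?_) <;>
  simp only [faceSplit, cubeHomeo_apply, mask_update, genPow_add, genPow_single,
    Bool.false_eq_true, if_false, if_true, zpow_zero, mul_one, ← mul_assoc,
    mul_right_comm g (genPow T _)]

theorem mapsTo_faceSplit_cubesOn (s : Finset (Fin d)) (K : Fin d) :
    MapsTo (faceSplit K) (cubesOn T (insert K s))
      (closure (zpowPairs (diagHomeo d (T K)) (cubesOn T s))) := by
  refine MapsTo.closure ?_ (continuous_faceSplit K)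
  rintro _ ⟨_, ⟨x, rfl⟩, _, ⟨g, n, hn, rfl⟩, rfl⟩
  have hn' : ∀ i ∉ s, update n K 0 i = 0 := fun i hi => by
    rcases eq_or_ne i K with rfl | hiK
    · exact update_self ..
    · rw [update_of_ne hiK]
      exact hn i (by simp [hiK, hi])
  have hmem := cubeHomeo_mem_cubeGroupOn T g hn'
  refine ⟨_, subset_closure (mem_iUnion.2 ⟨x, _, hmem, rfl⟩), n K, ?_⟩
  have hc : Commute _ (diagHomeo d (T K)) := commute_diagHomeo T hmem (genGroup.gen T K)
  rw [faceSplit_cubeHomeo, (hc.zpow_right (n K)).eq]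
  rfl

theorem pairOrbit_faceSplit_subset {s : Finset (Fin d)} {K : Fin d} (hK : K ∉ s)
    (y : (Fin d → Bool) → X) :
    pairOrbit (cubeGroupOn T s) (diagHomeo d (T K)) (faceSplit K y) ⊆
      faceSplit K '' orbitOf (cubeGroupOn T (insert K s)) y := by
  rintro _ ⟨_, ⟨g, m, hm, rfl⟩, c, rfl⟩
  have hm' : ∀ i ∉ insert K s, update m K c i = 0 := fun i hi => by
    rw [Finset.mem_insert, not_or] at hi
    rw [update_of_ne hi.1, hm i hi.2]
  refine ⟨_, ⟨_, cubeHomeo_mem_cubeGroupOn T g hm', rfl⟩, ?_⟩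
  rw [faceSplit_cubeHomeo, update_idem, update_eq_self_iff.2 (hm K hK).symm, update_self]

end Splitting

section Minimality

variable {X : Type*} [TopologicalSpace X] [CompactSpace X] [T2Space X]
  [SecondCountableTopology X] (T : Fin d → X ≃ₜ X) [IsMulCommutative (genGroup T)]

theorem isMinimalOn_cubesOn_insert {s : Finset (Fin d)} {K : Fin d} (hK : K ∉ s)
    (hs : IsMinimalOn (cubeGroupOn T s) (cubesOn T s)) :
    IsMinimalOn (cubeGroupOn T (insert K s)) (cubesOn T (insert K s)) := by
  intro y hy z hz
  have hpairs := closure_zpowPairs_subset_closure_pairOrbit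
    (diagHomeo_mem_cubeGroupOn T s (genGroup.gen T K))
    (fun a ha => commute_diagHomeo T ha (genGroup.gen T K)) isClosed_closure
    (fun a ha => mapsTo_cubesOn T ha) hs (mapsTo_faceSplit_cubesOn T s K hy)
  obtain ⟨w, hw, hwz⟩ :
      faceSplit K z ∈ faceSplit K '' closure (orbitOf (cubeGroupOn T (insert K s)) y) := by
    rw [← ((continuous_faceSplit K).isClosedEmbedding (faceSplit_injective K)).closure_image_eq]
    exact closure_mono (pairOrbit_faceSplit_subset T hK y)
      (hpairs (mapsTo_faceSplit_cubesOn T s K hz))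
  rwa [← faceSplit_injective K hwz]

theorem isMinimalOn_cubesOn (hmin : IsMinimalSystem T) (s : Finset (Fin d)) :
    IsMinimalOn (cubeGroupOn T s) (cubesOn T s) := by
  induction s using Finset.induction_on with
  | empty => exact isMinimalOn_cubesOn_empty T hmin
  | insert K s hK ih => exact isMinimalOn_cubesOn_insert T hK ih

end Minimality

theorem exists_genGroup_apply_eq_of_mem_cubeGroup {X : Type*} [TopologicalSpace X]
    (T : Fin d → X ≃ₜ X) {h : ((Fin d → Bool) → X) ≃ₜ ((Fin d → Bool) → X)}
    (hh : h ∈ cubeGroup T) (ε : Fin d → Bool) :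
    ∃ g ∈ genGroup T, ∀ y, h y ε = g (y ε) := by
  induction hh using Subgroup.closure_induction with
  | mem h hh =>
    rcases hh with ⟨i, rfl⟩ | ⟨g, hg, rfl⟩
    · refine ⟨if ε i then T i else 1, ?_, fun y => ?_⟩
      · split_ifs
        exacts [Subgroup.subset_closure ⟨i, rfl⟩, one_mem _]
      · by_cases hεi : ε i <;> simp [faceHomeo, hεi]
    · exact ⟨g, hg, fun y => rfl⟩
  | one => exact ⟨1, one_mem _, fun y => rfl⟩
  | mul _ _ _ _ ih ih' =>
    obtain ⟨g, hg, hgh⟩ := ih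
    obtain ⟨g', hg', hgh'⟩ := ih'
    exact ⟨g * g', mul_mem hg hg', fun y => by simp [hgh, hgh']⟩
  | inv _ _ ih =>
    obtain ⟨g, hg, hgh⟩ := ih
    refine ⟨g⁻¹, inv_mem hg, fun y => ?_⟩
    rw [eq_comm, ← g.injective.eq_iff, ← hgh]
    simp

theorem cubeGroup_distal {X : Type*} [MetricSpace X] (T : Fin d → X ≃ₜ X)
    (hdist : IsDistalSystem T) {x y : (Fin d → Bool) → X} (hxy : x ≠ y) :
    ∃ δ > 0, ∀ h ∈ cubeGroup T, δ ≤ dist (h x) (h y) := by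
  obtain ⟨ε, hε⟩ := Function.ne_iff.1 hxy
  obtain ⟨δ, hδ, hd⟩ := hdist _ _ hε
  refine ⟨δ, hδ, fun h hh => ?_⟩
  obtain ⟨g, hg, hgh⟩ := exists_genGroup_apply_eq_of_mem_cubeGroup T hh ε
  calc δ ≤ dist (g (x ε)) (g (y ε)) := hd g hg
    _ = dist (h x ε) (h y ε) := by rw [hgh, hgh]
    _ ≤ dist (h x) (h y) := dist_le_pi_dist _ _ ε

/-- **Minimality and distality of the cube system** (Proposition `CubeMin`).  If
`(X,T₁,…,T_d)` is a minimal `ℤ^d`-system, then the action of `𝒢_{T₁,…,T_d}` on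
`Q_{T₁,…,T_d}(X)` is minimal; if moreover the system is distal, this action is distal. -/
theorem cubes_minimal_and_distal {X : Type*} [MetricSpace X] [CompactSpace X] {d : ℕ}
    (T : Fin d → X ≃ₜ X)
    (hcomm : ∀ i j : Fin d, ∀ x : X, T i (T j x) = T j (T i x))
    (hmin : IsMinimalSystem T) :
    (∀ x ∈ cubes T, ∀ y ∈ cubes T,
        y ∈ closure {z : (Fin d → Bool) → X | ∃ g ∈ cubeGroup T, g x = z}) ∧
      (IsDistalSystem T → ∀ x ∈ cubes T, ∀ y ∈ cubes T, x ≠ y →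
        ∃ δ > 0, ∀ g ∈ cubeGroup T, δ ≤ dist (g x) (g y)) := by
  have := isMulCommutative_genGroup T hcomm
  refine ⟨?_, fun hdist x _ y _ hxy => cubeGroup_distal T hdist hxy⟩
  rw [cubeGroup_eq_cubeGroupOn_univ, cubes_eq_cubesOn_univ]
  exact isMinimalOn_cubesOn T hmin Finset.univ
end

section
/- Every minimal distal ℤ^d-system (X,T₁,…,T_d) has the gluing property: for every j ∈ [d] and all x, y ∈ Q_{T₁,…,T_d}(X) such that the j-upper face of x equals the j-lower face of y, the point z defined by z_ε = x_ε when ε_j = 0 and z_ε = y_ε when ε_j = 1 belongs to Q_{T₁,…,T_d}(X). -/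
/-!
Distality makes the enveloping semigroup `E` of the cube system, the closure of the tuples
`ε ↦ T^{m + k ⊙ ε}` in the pointwise topology, a group: it is a compact right-topological
semigroup whose only idempotent is the identity, so Ellis' idempotent theorem gives inverses.
Together with minimality of `X`, `Q = cubes T` is then a single `E`-orbit. Hence every cube `y`
is `M • D y`, where `D y` is the `j`-lower face of `y` doubled, and after multiplying `M` by the
inverse of its own `j`-doubling, `M` is the identity on the `j`-lower face. If also `x = N • D x`
and the `j`-upper face of `x` is the `j`-lower face of `y`, the glued point is `(M * N) • D x`.
-/

open Function Set

variable {d : ℕ}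

/-- The gluing property: if the `j`-upper face of a cube `x` equals the `j`-lower face of a
cube `y`, the point obtained by gluing the `j`-lower face of `x` with the `j`-upper face of
`y` is again a cube. -/
def GluingProp {X : Type*} [TopologicalSpace X] (T : Fin d → X ≃ₜ X) : Prop :=
  ∀ j : Fin d, ∀ x ∈ cubes T, ∀ y ∈ cubes T,
    (∀ ε : Fin d → Bool, x (Function.update ε j true) = y (Function.update ε j false)) →
    (fun ε : Fin d → Bool => if ε j then y ε else x ε) ∈ cubes T

theorem List.prod_map_mul_prod_map_of_commute {M ι : Type*} [Monoid M] (f g : ι → M)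
    (l : List ι) (h : ∀ i ∈ l, ∀ j ∈ l, Commute (f i) (g j)) :
    (l.map f).prod * (l.map g).prod = (l.map fun i => f i * g i).prod := by
  induction l with
  | nil => simp
  | cons a t ih =>
    have hc : Commute (t.map f).prod (g a) :=
      Commute.list_prod_left _ _ fun x hx => by
        obtain ⟨i, hi, rfl⟩ := List.mem_map.1 hx
        exact h i (List.mem_cons_of_mem _ hi) a List.mem_cons_self
    simp only [List.map_cons, List.prod_cons]
    rw [← ih fun i hi j hj => h i (List.mem_cons_of_mem _ hi) j (List.mem_cons_of_mem _ hj),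
      mul_assoc, ← mul_assoc (t.map f).prod, hc.eq]
    simp only [mul_assoc]

section MultiZPow

variable {G : Type*} [Group G] (T : Fin d → G)

def multiZPow (m : Fin d → ℤ) : G :=
  ((List.finRange d).map fun i => T i ^ m i).prod

@[simp]
theorem multiZPow_zero : multiZPow T 0 = 1 :=
  List.prod_eq_one (by simp)

theorem multiZPow_add {T : Fin d → G} (hT : ∀ i j, Commute (T i) (T j)) (m n : Fin d → ℤ) :
    multiZPow T (m + n) = multiZPow T m * multiZPow T n := by
  rw [multiZPow, multiZPow, multiZPow, List.prod_map_mul_prod_map_of_commute _ _ _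
    fun i _ j _ => (hT i j).zpow_zpow _ _]
  simp only [Pi.add_apply, zpow_add]

theorem multiZPow_single (i : Fin d) : multiZPow T (Pi.single i 1) = T i := by
  rw [multiZPow, List.prod_map_eq_pow_single i _ fun j hj _ => by simp [Pi.single_eq_of_ne hj],
    List.count_eq_one_of_mem (List.nodup_finRange d) (List.mem_finRange i)]
  simp

theorem multiZPow_mem_closure (m : Fin d → ℤ) : multiZPow T m ∈ Subgroup.closure (range T) :=
  Subgroup.list_prod_mem _ <| List.forall_mem_map.2 fun i _ =>
    zpow_mem (Subgroup.subset_closure (mem_range_self i)) _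

theorem exists_multiZPow_eq_of_mem_closure {T : Fin d → G} (hT : ∀ i j, Commute (T i) (T j))
    {g : G} (hg : g ∈ Subgroup.closure (range T)) : ∃ m, multiZPow T m = g := by
  induction hg using Subgroup.closure_induction with
  | mem _ h => obtain ⟨i, rfl⟩ := h; exact ⟨Pi.single i 1, multiZPow_single T i⟩
  | one => exact ⟨0, multiZPow_zero T⟩
  | mul _ _ _ _ hx hy =>
    obtain ⟨⟨m, rfl⟩, n, rfl⟩ := And.intro hx hy
    exact ⟨m + n, multiZPow_add hT m n⟩
  | inv _ _ hx =>
    obtain ⟨m, rfl⟩ := hx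
    refine ⟨-m, eq_inv_of_mul_eq_one_left ?_⟩
    rw [← multiZPow_add hT, neg_add_cancel, multiZPow_zero]

end MultiZPow

/-- `k ⊙ ε`: the vertex `ε` of the box `∏ i, [0, k i]`. -/
def vertex (k : Fin d → ℤ) (ε : Fin d → Bool) : Fin d → ℤ :=
  fun i => if ε i then k i else 0

@[simp]
theorem vertex_zero (ε : Fin d → Bool) : vertex 0 ε = 0 := by
  funext i; simp [vertex]

theorem vertex_add (k k' : Fin d → ℤ) (ε : Fin d → Bool) :
    vertex (k + k') ε = vertex k ε + vertex k' ε := by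
  funext i; by_cases h : ε i <;> simp [vertex, h]

theorem vertex_update_false (k : Fin d → ℤ) (ε : Fin d → Bool) (j : Fin d) :
    vertex k (update ε j false) = vertex (update k j 0) ε := by
  funext i; by_cases h : i = j <;> simp [vertex, h]

theorem cubeMap_eq_multiZPow {X : Type*} [TopologicalSpace X] (T : Fin d → X ≃ₜ X)
    (n : Fin d → ℤ) (ε : Fin d → Bool) : cubeMap T n ε = multiZPow T (vertex n ε) := rfl

theorem multiZPow_apply_apply {X : Type*} [TopologicalSpace X] {T : Fin d → X ≃ₜ X}
    (hT : ∀ i j, Commute (T i) (T j)) (m n : Fin d → ℤ) (x : X) :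
    multiZPow T m (multiZPow T n x) = multiZPow T (m + n) x := by
  rw [multiZPow_add hT]; rfl

namespace Function.End

variable {X : Type*} [TopologicalSpace X]

instance : TopologicalSpace (Function.End X) := inferInstanceAs (TopologicalSpace (X → X))

instance [CompactSpace X] : CompactSpace (Function.End X) :=
  inferInstanceAs (CompactSpace (X → X))

instance [T2Space X] : T2Space (Function.End X) := inferInstanceAs (T2Space (X → X))

theorem continuous_apply (x : X) : Continuous fun f : Function.End X => f x :=
  _root_.continuous_apply x

variable {ι : Type*}

theorem continuous_pi_mul_right (Q : ι → Function.End X) :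
    Continuous fun P : ι → Function.End X => P * Q :=
  continuous_pi fun i => continuous_pi fun x =>
    (continuous_apply (Q i x)).comp (_root_.continuous_apply i)

theorem continuous_pi_mul_left {Q : ι → Function.End X} (hQ : ∀ i, Continuous (Q i)) :
    Continuous fun P : ι → Function.End X => Q * P :=
  continuous_pi fun i => continuous_pi fun x =>
    (hQ i).comp ((continuous_apply x).comp (_root_.continuous_apply i))

theorem continuous_pi_smul_const (u : ι → X) :
    Continuous fun P : ι → Function.End X => P • u :=
  continuous_pi fun i => (continuous_apply (u i)).comp (_root_.continuous_apply i)

theorem continuous_pi_const_smul {P : ι → Function.End X} (hP : ∀ i, Continuous (P i)) :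
    Continuous fun u : ι → X => P • u :=
  continuous_pi fun i => (hP i).comp (_root_.continuous_apply i)

theorem pi_mul_mem_closure {S : Set (ι → Function.End X)}
    (hcont : ∀ g ∈ S, ∀ i, Continuous (g i)) (hmul : ∀ g ∈ S, ∀ h ∈ S, g * h ∈ S)
    {P Q : ι → Function.End X} (hP : P ∈ closure S) (hQ : Q ∈ closure S) :
    P * Q ∈ closure S := by
  have hleft : ∀ g ∈ S, g * Q ∈ closure S := fun g hg =>
    MapsTo.closure (fun h hh => hmul g hg h hh) (continuous_pi_mul_left (hcont g hg)) hQ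
  exact MapsTo.closure_left hleft (continuous_pi_mul_right Q) isClosed_closure hP

end Function.End

theorem Function.End.eq_one_of_mul_self_of_mem_closure {X : Type*} [MetricSpace X]
    {G : Set (Function.End X)}
    (hG : ∀ x y : X, x ≠ y → ∃ δ > 0, ∀ g ∈ G, δ ≤ dist (g x) (g y))
    {q : Function.End X} (hq : q ∈ closure G) (hqq : q * q = q) : q = 1 := by
  funext x
  by_contra hx
  obtain ⟨δ, hδ, hδG⟩ := hG x (q x) (Ne.symm hx)
  have hle : δ ≤ dist (q x) (q (q x)) :=
    closure_minimal hδG (isClosed_le continuous_const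
      ((Function.End.continuous_apply x).dist (Function.End.continuous_apply (q x)))) hq
  rw [show q (q x) = q x from congrFun hqq x, dist_self] at hle
  linarith

section Ellis

variable {M : Type*} [Monoid M] [TopologicalSpace M] [T2Space M] {E : Set M}

theorem IsCompact.exists_left_inv_of_idempotent_eq_one (hM : ∀ r : M, Continuous (· * r))
    (hE : IsCompact E) (hEmul : ∀ a ∈ E, ∀ b ∈ E, a * b ∈ E)
    (hidem : ∀ e ∈ E, e * e = e → e = 1) {p : M} (hp : p ∈ E) : ∃ q ∈ E, q * p = 1 := by
  set Ep := (· * p) '' E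
  have hEp : ∀ a ∈ Ep, ∀ b ∈ Ep, a * b ∈ Ep := by
    rintro _ ⟨a, ha, rfl⟩ _ ⟨b, hb, rfl⟩
    exact ⟨a * p * b, hEmul _ (hEmul _ ha _ hp) _ hb, by simp only [mul_assoc]⟩
  obtain ⟨_, ⟨q, hq, rfl⟩, hqq⟩ :=
    exists_idempotent_in_compact_subsemigroup hM Ep ⟨p * p, p, hp, rfl⟩ (hE.image (hM p)) hEp
  exact ⟨q, hq, hidem _ (hEmul _ hq _ hp) hqq⟩

theorem IsCompact.exists_inv_of_idempotent_eq_one (hM : ∀ r : M, Continuous (· * r))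
    (hE : IsCompact E) (hEmul : ∀ a ∈ E, ∀ b ∈ E, a * b ∈ E)
    (hidem : ∀ e ∈ E, e * e = e → e = 1) {p : M} (hp : p ∈ E) :
    ∃ q ∈ E, q * p = 1 ∧ p * q = 1 := by
  obtain ⟨q, hq, hqp⟩ := hE.exists_left_inv_of_idempotent_eq_one hM hEmul hidem hp
  obtain ⟨r, -, hrq⟩ := hE.exists_left_inv_of_idempotent_eq_one hM hEmul hidem hq
  have hrp : r = p := by
    calc r = r * (q * p) := by rw [hqp, mul_one]
      _ = p := by rw [← mul_assoc, hrq, one_mul]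
  exact ⟨q, hq, hqp, hrp ▸ hrq⟩

end Ellis

section CubeEllis

variable {X : Type*} [TopologicalSpace X] (T : Fin d → X ≃ₜ X)

def cubeGen (m k : Fin d → ℤ) : (Fin d → Bool) → Function.End X :=
  fun ε => ⇑(multiZPow T (m + vertex k ε))

/-- The enveloping semigroup of the cube system, acting coordinatewise on `X^{2^d}`. -/
def cubeEllis : Set ((Fin d → Bool) → Function.End X) :=
  closure {P | ∃ m k, cubeGen T m k = P}

theorem cubeGen_smul_const (m k : Fin d → ℤ) (x : X) :
    cubeGen T m k • const (Fin d → Bool) x = fun ε => multiZPow T (m + vertex k ε) x := rfl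

variable {T}

theorem cubeGen_mul (hT : ∀ i j, Commute (T i) (T j)) (m k m' k' : Fin d → ℤ) :
    cubeGen T m k * cubeGen T m' k' = cubeGen T (m + m') (k + k') := by
  funext ε x
  change multiZPow T _ (multiZPow T _ x) = multiZPow T _ x
  rw [multiZPow_apply_apply hT, vertex_add, add_add_add_comm]

theorem mul_mem_cubeEllis (hT : ∀ i j, Commute (T i) (T j))
    {P Q : (Fin d → Bool) → Function.End X} (hP : P ∈ cubeEllis T) (hQ : Q ∈ cubeEllis T) :
    P * Q ∈ cubeEllis T := by
  refine Function.End.pi_mul_mem_closure ?_ ?_ hP hQ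
  · rintro _ ⟨m, k, rfl⟩ ε
    exact (multiZPow T _).continuous
  · rintro _ ⟨m, k, rfl⟩ _ ⟨m', k', rfl⟩
    exact ⟨m + m', k + k', (cubeGen_mul hT m k m' k').symm⟩

theorem apply_mem_closure_of_mem_cubeEllis {P : (Fin d → Bool) → Function.End X}
    (hP : P ∈ cubeEllis T) (ε : Fin d → Bool) :
    P ε ∈ closure ((fun g : X ≃ₜ X => (⇑g : Function.End X)) '' genGroup T) := by
  refine MapsTo.closure (f := fun P => P ε) ?_ (_root_.continuous_apply ε) hP
  rintro _ ⟨m, k, rfl⟩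
  exact ⟨_, multiZPow_mem_closure T _, rfl⟩

theorem cubeGen_smul_cubeMap (hT : ∀ i j, Commute (T i) (T j)) (m k n : Fin d → ℤ) (x : X) :
    cubeGen T m k • (fun ε => cubeMap T n ε x) =
      fun ε => cubeMap T (n + k) ε (multiZPow T m x) := by
  funext ε
  change multiZPow T (m + vertex k ε) (multiZPow T (vertex n ε) x) =
    multiZPow T (vertex (n + k) ε) (multiZPow T m x)
  rw [multiZPow_apply_apply hT, multiZPow_apply_apply hT, vertex_add,
    show m + vertex k ε + vertex n ε = vertex n ε + vertex k ε + m by abel]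

theorem smul_mem_cubes (hT : ∀ i j, Commute (T i) (T j)) {P : (Fin d → Bool) → Function.End X}
    (hP : P ∈ cubeEllis T) {u : (Fin d → Bool) → X} (hu : u ∈ cubes T) :
    P • u ∈ cubes T := by
  have hgen : ∀ m k, MapsTo (cubeGen T m k • ·) (cubes T) (cubes T) := by
    intro m k
    refine MapsTo.closure ?_
      (Function.End.continuous_pi_const_smul fun _ => (multiZPow T _).continuous)
    rintro _ ⟨x, n, hy⟩
    obtain rfl := funext hy
    exact ⟨_, n + k, fun ε => congrFun (cubeGen_smul_cubeMap hT m k n x) ε⟩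
  refine MapsTo.closure_left (f := (· • u)) ?_ (Function.End.continuous_pi_smul_const u)
    isClosed_closure hP
  rintro _ ⟨m, k, rfl⟩
  exact hgen m k hu

end CubeEllis

section FaceDouble

variable {α : Type*} (j : Fin d)

def faceDouble (u : (Fin d → Bool) → α) : (Fin d → Bool) → α :=
  fun ε => u (update ε j false)

variable {j}

theorem faceDouble_apply_of_eq_false (u : (Fin d → Bool) → α) {ε : Fin d → Bool}
    (hε : ε j = false) : faceDouble j u ε = u ε := by
  rw [faceDouble, update_eq_self_iff.2 hε.symm]

@[simp]
theorem faceDouble_faceDouble (u : (Fin d → Bool) → α) :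
    faceDouble j (faceDouble j u) = faceDouble j u := by
  funext ε; simp only [faceDouble, update_idem]

theorem faceDouble_smul {X : Type*} (P : (Fin d → Bool) → Function.End X)
    (u : (Fin d → Bool) → X) : faceDouble j (P • u) = faceDouble j P • faceDouble j u := rfl

theorem continuous_faceDouble [TopologicalSpace α] :
    Continuous (faceDouble j : ((Fin d → Bool) → α) → _) :=
  continuous_pi fun _ => continuous_apply _

variable {X : Type*} [TopologicalSpace X] {T : Fin d → X ≃ₜ X}

theorem faceDouble_mem_cubeEllis {P : (Fin d → Bool) → Function.End X}
    (hP : P ∈ cubeEllis T) : faceDouble j P ∈ cubeEllis T := by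
  refine MapsTo.closure ?_ continuous_faceDouble hP
  rintro _ ⟨m, k, rfl⟩
  refine ⟨m, update k j 0, funext fun ε => ?_⟩
  rw [faceDouble, cubeGen, cubeGen, vertex_update_false]

theorem faceDouble_mem_cubes {u : (Fin d → Bool) → X} (hu : u ∈ cubes T) :
    faceDouble j u ∈ cubes T := by
  refine MapsTo.closure ?_ continuous_faceDouble hu
  rintro _ ⟨x, n, hy⟩
  refine ⟨x, update n j 0, fun ε => ?_⟩
  rw [faceDouble, hy, cubeMap_eq_multiZPow, cubeMap_eq_multiZPow, vertex_update_false]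

end FaceDouble

section DistalCubeEllis

variable {X : Type*} [MetricSpace X] [CompactSpace X] {T : Fin d → X ≃ₜ X}

theorem exists_inv_of_mem_cubeEllis (hT : ∀ i j, Commute (T i) (T j)) (hdist : IsDistalSystem T)
    {P : (Fin d → Bool) → Function.End X} (hP : P ∈ cubeEllis T) :
    ∃ Q ∈ cubeEllis T, Q * P = 1 ∧ P * Q = 1 := by
  refine isClosed_closure.isCompact.exists_inv_of_idempotent_eq_one
    Function.End.continuous_pi_mul_right (fun _ ha _ hb => mul_mem_cubeEllis hT ha hb)
    (fun e he hee => ?_) hP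
  funext ε
  refine Function.End.eq_one_of_mul_self_of_mem_closure ?_
    (apply_mem_closure_of_mem_cubeEllis he ε) (congrFun hee ε)
  rintro x y hxy
  obtain ⟨δ, hδ, hδG⟩ := hdist x y hxy
  exact ⟨δ, hδ, by rintro _ ⟨g, hg, rfl⟩; exact hδG g hg⟩

theorem exists_smul_const_eq_of_mem_cubes (hT : ∀ i j, Commute (T i) (T j))
    (hmin : IsMinimalSystem T) (a : X) {u : (Fin d → Bool) → X} (hu : u ∈ cubes T) :
    ∃ P ∈ cubeEllis T, P • const (Fin d → Bool) a = u := by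
  set O := (· • const (Fin d → Bool) a) '' cubeEllis T
  have hO : IsClosed O :=
    (isClosed_closure.isCompact.image (Function.End.continuous_pi_smul_const _)).isClosed
  have hconst : ∀ x : X, const (Fin d → Bool) x ∈ O := by
    have horbit : {y | ∃ g ∈ genGroup T, g a = y} ⊆ {x | const (Fin d → Bool) x ∈ O} := by
      rintro _ ⟨g, hg, rfl⟩
      obtain ⟨m, rfl⟩ := exists_multiZPow_eq_of_mem_closure hT hg
      exact ⟨cubeGen T m 0, subset_closure ⟨m, 0, rfl⟩, by
        simp only [cubeGen_smul_const, vertex_zero, add_zero]; rfl⟩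
    intro x
    exact closure_minimal horbit (hO.preimage (continuous_pi fun _ => continuous_id))
      ((hmin a).closure_eq ▸ mem_univ x)
  refine closure_minimal ?_ hO hu
  rintro _ ⟨x, n, hy⟩
  obtain ⟨P, hP, hPx⟩ := hconst x
  refine ⟨cubeGen T 0 n * P, mul_mem_cubeEllis hT (subset_closure ⟨0, n, rfl⟩) hP, ?_⟩
  change (cubeGen T 0 n * P) • _ = _
  rw [mul_smul, show P • const (Fin d → Bool) a = const (Fin d → Bool) x from hPx,
    cubeGen_smul_const]
  funext ε
  rw [hy, zero_add, cubeMap_eq_multiZPow]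

theorem exists_smul_eq_of_mem_cubes (hT : ∀ i j, Commute (T i) (T j)) (hmin : IsMinimalSystem T)
    (hdist : IsDistalSystem T) {u v : (Fin d → Bool) → X} (hu : u ∈ cubes T)
    (hv : v ∈ cubes T) : ∃ P ∈ cubeEllis T, P • u = v := by
  obtain ⟨a⟩ : Nonempty X := ⟨u fun _ => false⟩
  obtain ⟨A, hA, rfl⟩ := exists_smul_const_eq_of_mem_cubes hT hmin a hu
  obtain ⟨B, hB, rfl⟩ := exists_smul_const_eq_of_mem_cubes hT hmin a hv
  obtain ⟨Q, hQ, hQA, -⟩ := exists_inv_of_mem_cubeEllis hT hdist hA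
  exact ⟨B * Q, mul_mem_cubeEllis hT hB hQ, by rw [mul_smul, ← mul_smul Q, hQA, one_smul]⟩

theorem exists_smul_faceDouble_eq (hT : ∀ i j, Commute (T i) (T j)) (hmin : IsMinimalSystem T)
    (hdist : IsDistalSystem T) (j : Fin d) {u : (Fin d → Bool) → X} (hu : u ∈ cubes T) :
    ∃ N ∈ cubeEllis T, N • faceDouble j u = u ∧ ∀ ε, ε j = false → N ε = 1 := by
  obtain ⟨P, hP, hPu⟩ := exists_smul_eq_of_mem_cubes hT hmin hdist (faceDouble_mem_cubes hu) hu
  obtain ⟨Q, hQ, hQP, hPQ⟩ := exists_inv_of_mem_cubeEllis hT hdist (faceDouble_mem_cubeEllis hP)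
  have hfix : faceDouble j P • faceDouble j u = faceDouble j u := by
    rw [← faceDouble_faceDouble u, ← faceDouble_smul, hPu, faceDouble_faceDouble]
  have hQfix : Q • faceDouble j u = faceDouble j u := by
    rw [← hfix, smul_smul, hQP, one_smul, hfix]
  refine ⟨P * Q, mul_mem_cubeEllis hT hP hQ, by rw [mul_smul, hQfix, hPu], fun ε hε => ?_⟩
  rw [Pi.mul_apply, ← faceDouble_apply_of_eq_false P hε, ← Pi.mul_apply, hPQ, Pi.one_apply]

end DistalCubeEllis

/-- **Gluing Lemma** (Lemma `pegado1`).  Every minimal distal `ℤ^d`-system has the gluing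
property. -/
theorem gluing_of_minimal_distal {X : Type*} [MetricSpace X] [CompactSpace X] {d : ℕ}
    (T : Fin d → X ≃ₜ X)
    (hcomm : ∀ i j : Fin d, ∀ x : X, T i (T j x) = T j (T i x))
    (hmin : IsMinimalSystem T) (hdist : IsDistalSystem T) :
    GluingProp T := by
  intro j x hx y hy hxy
  have hT : ∀ i j, Commute (T i) (T j) := fun i j => Homeomorph.ext (hcomm i j)
  have hDx := faceDouble_mem_cubes (j := j) hx
  obtain ⟨N, hN, hNx⟩ := exists_smul_eq_of_mem_cubes hT hmin hdist hDx hx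
  obtain ⟨M, hM, hMy, hMlow⟩ := exists_smul_faceDouble_eq hT hmin hdist j hy
  convert smul_mem_cubes hT (mul_mem_cubeEllis hT hM hN) hDx using 1
  rw [mul_smul, hNx]
  funext ε
  change _ = M ε (x ε)
  cases hε : ε j
  · rw [if_neg (by simp), hMlow ε hε]
    rfl
  · have hupper : x ε = faceDouble j y ε := by
      rw [faceDouble, ← hxy ε, ← hε, update_eq_self]
    rw [if_pos rfl, hupper]
    exact (congrFun hMy ε).symm
end

section
/- If a ℤ^d-system (X,T₁,…,T_d) has the unique closing parallelepiped property, then R_{T_j}(X) = Δ_X for every j ∈ [d]. -/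
open Function Set

variable {d : ℕ}

/-- Unique closing parallelepiped property: two cubes agreeing in `2^d - 1` of their
coordinates are equal. -/
def HasUCP {X : Type*} [TopologicalSpace X] (T : Fin d → X ≃ₜ X) : Prop :=
  ∀ x ∈ cubes T, ∀ y ∈ cubes T,
    ∀ ε₀ : Fin d → Bool, (∀ ε, ε ≠ ε₀ → x ε = y ε) → x = y

/-- The relation `R_{T_j}(X)`: pairs `(x,y)` for which there is a cube `z` with
`z_∅ = x`, `z_{{j}} = y` and `z_ε = z_{ε ∪ {j}}` for every nonempty `ε ⊆ [d] \ {j}`. -/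
def relRT {X : Type*} [TopologicalSpace X] (T : Fin d → X ≃ₜ X) (j : Fin d) : Set (X × X) :=
  {p | ∃ z ∈ cubes T, z (fun _ => false) = p.1 ∧ z (fun i => decide (i = j)) = p.2 ∧
    ∀ ε : Fin d → Bool, ε j = false → ε ≠ (fun _ => false) →
      z ε = z (Function.update ε j true)}

/-- The `(T₁,…,T_d)`-regionally proximal relation. -/
def relRP {X : Type*} [TopologicalSpace X] (T : Fin d → X ≃ₜ X) : Set (X × X) :=
  ⋂ j : Fin d, relRT T j

/-- **Proposition 4.**  If a `ℤ^d`-system has the unique closing parallelepiped property,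
then `R_{T_j}(X) = Δ_X` for every `j ∈ [d]`. -/
theorem relRT_eq_diagonal_of_ucp {X : Type*} [MetricSpace X] [CompactSpace X] {d : ℕ}
    (T : Fin d → X ≃ₜ X)
    (hcomm : ∀ i j : Fin d, ∀ x : X, T i (T j x) = T j (T i x))
    (hucp : HasUCP T) :
    ∀ j : Fin d, relRT T j = Set.diagonal X := by
  intro j
  apply Set.Subset.antisymm
  · rintro ⟨x, y⟩ ⟨z, hz, h0, h1, hstep⟩
    set φ : ((Fin d → Bool) → X) → ((Fin d → Bool) → X) :=
      fun u ε => u (Function.update ε j false) with hφ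
    have hφcont : Continuous φ := continuous_pi fun ε => continuous_apply _
    have hmaps : Set.MapsTo φ
        {y : (Fin d → Bool) → X | ∃ (x : X) (n : Fin d → ℤ), ∀ ε, y ε = cubeMap T n ε x}
        {y : (Fin d → Bool) → X | ∃ (x : X) (n : Fin d → ℤ), ∀ ε, y ε = cubeMap T n ε x} := by
      rintro u ⟨x, n, hu⟩
      refine ⟨x, Function.update n j 0, fun ε => ?_⟩
      have : cubeMap T n (Function.update ε j false) = cubeMap T (Function.update n j 0) ε := by
        unfold cubeMap
        congr 1
        apply List.map_congr_left
        intro i _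
        congr 1
        by_cases h : i = j
        · subst h; simp
        · simp [Function.update_apply, h]
      simp only [hφ]
      rw [hu, this]
    have hφz : φ z ∈ cubes T := map_mem_closure hφcont hz hmaps
    have key : z = φ z := by
      apply hucp z hz (φ z) hφz (fun i => decide (i = j))
      intro ε hε
      simp only [hφ]
      by_cases h : ε j = false
      · have : Function.update ε j false = ε := by
          rw [← h]; exact Function.update_eq_self j ε
        rw [this]
      · have hεj : ε j = true := by simpa using h
        have h1' : (Function.update ε j false) j = false := by simp
        have h2' : Function.update ε j false ≠ (fun _ => false) := by
          intro hc
          apply hε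
          funext i
          by_cases hij : i = j
          · subst hij; simp [hεj]
          · have := congrFun hc i
            simp [Function.update_apply, hij] at this
            simp [this, hij]
        have := hstep _ h1' h2'
        rw [this]
        congr 1
        funext i
        by_cases hij : i = j
        · subst hij; simp [hεj]
        · simp [Function.update_apply, hij]
    have hupd : Function.update (fun i => decide (i = j)) j false = (fun _ => false) := by
      funext i
      by_cases hij : i = j
      · subst hij; simp
      · simp [Function.update_apply, hij]
    have : y = x := by
      rw [show y = (x, y).2 from rfl, show x = (x, y).1 from rfl, ← h1, ← h0, key]
      simp only [hφ]
      rw [hupd]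
      congr 1
      funext i
      by_cases hij : i = j <;> simp [Function.update_apply, hij]
    simp [Set.diagonal, this]
  · rintro ⟨x, y⟩ h
    have hxy : x = y := h
    subst hxy
    refine ⟨fun _ => x, ?_, rfl, rfl, fun _ _ _ => rfl⟩
    apply subset_closure
    refine ⟨x, fun _ => 0, fun ε => ?_⟩
    have : cubeMap T (fun _ => (0:ℤ)) ε = 1 := by
      unfold cubeMap
      apply List.prod_eq_one
      intro a ha
      simp only [List.mem_map] at ha
      obtain ⟨i, _, hi⟩ := ha
      simp [← hi]
    rw [this]
    rfl
end

section
/- If (X,T₁,…,T_d) is a minimal distal ℤ^d-system, then R_{T₁,…,T_d}(X) is a closed equivalence relation on X which is invariant under g × g for every g ∈ G. -/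
open Function Set

variable {d : ℕ}

namespace RelRPProof

set_option linter.unusedSectionVars false

section Ellis

variable {M : Type*} [MetricSpace M] [CompactSpace M]

/-- A family of maps suitable for Ellis theory: a distal group-like family. -/
structure EllisFam (S : Set (M → M)) : Prop where
  idm : id ∈ S
  comp : ∀ {f g : M → M}, f ∈ S → g ∈ S → f ∘ g ∈ S
  cont : ∀ {f : M → M}, f ∈ S → Continuous f
  distal : ∀ a b : M, a ≠ b → ∃ δ > 0, ∀ f ∈ S, δ ≤ dist (f a) (f b)

variable {S : Set (M → M)}

lemma EllisFam.id_mem_closure (hS : EllisFam S) : (id : M → M) ∈ closure S :=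
  subset_closure hS.idm

lemma continuous_comp_right (q : M → M) : Continuous fun f : M → M => f ∘ q :=
  continuous_pi fun x => continuous_apply (q x)

lemma continuous_comp_left {f : M → M} (hf : Continuous f) :
    Continuous fun g : M → M => f ∘ g :=
  continuous_pi fun x => hf.comp (continuous_apply x)

lemma EllisFam.comp_mem_closure (hS : EllisFam S) {p q : M → M}
    (hp : p ∈ closure S) (hq : q ∈ closure S) : p ∘ q ∈ closure S := by
  have step1 : ∀ f ∈ S, f ∘ q ∈ closure S := by
    intro f hf
    have h1 : (fun g : M → M => f ∘ g) '' closure S ⊆ closure ((fun g : M → M => f ∘ g) '' S) :=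
      image_closure_subset_closure_image (continuous_comp_left (hS.cont hf))
    have h2 : (fun g : M → M => f ∘ g) '' S ⊆ S := by
      rintro _ ⟨g, hg, rfl⟩; exact hS.comp hf hg
    exact (closure_mono h2) (h1 ⟨q, hq, rfl⟩)
  have h1 : (fun f : M → M => f ∘ q) '' closure S ⊆ closure ((fun f : M → M => f ∘ q) '' S) :=
    image_closure_subset_closure_image (continuous_comp_right q)
  have h2 : (fun f : M → M => f ∘ q) '' S ⊆ closure S := by
    rintro _ ⟨f, hf, rfl⟩; exact step1 f hf
  have := h1 ⟨p, hp, rfl⟩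
  rw [← closure_closure (s := S)]
  exact closure_mono h2 this

/-- distality: idempotents in the Ellis semigroup are the identity. -/
lemma EllisFam.idem_eq_id (hS : EllisFam S) {p : M → M}
    (hp : p ∈ closure S) (hidem : p ∘ p = p) : p = id := by
  funext a
  by_contra hne
  have hne' : a ≠ p a := fun h => hne (by simp [← h])
  obtain ⟨δ, hδ, hd⟩ := hS.distal a (p a) hne'
  have hΦ : Continuous fun f : M → M => ((f a, f (p a)) : M × M) :=
    (continuous_apply a).prodMk (continuous_apply (p a))
  have hmem : ((p a, p (p a)) : M × M) ∈
      closure ((fun f : M → M => ((f a, f (p a)) : M × M)) '' S) :=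
    image_closure_subset_closure_image hΦ ⟨p, hp, rfl⟩
  have hpp : p (p a) = p a := congrFun hidem a
  rw [hpp, Metric.mem_closure_iff] at hmem
  obtain ⟨w, ⟨f, hf, rfl⟩, hw⟩ := hmem (δ / 2) (by linarith)
  rw [Prod.dist_eq, max_lt_iff] at hw
  obtain ⟨h1, h2⟩ := hw
  have : dist (f a) (f (p a)) < δ := by
    calc dist (f a) (f (p a)) ≤ dist (f a) (p a) + dist (p a) (f (p a)) := dist_triangle _ _ _
    _ < δ / 2 + δ / 2 := add_lt_add (by rw [dist_comm]; exact h1) h2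
    _ = δ := by ring
  exact absurd (hd f hf) (not_le.mpr this)

/-- Ellis–Namakura: idempotent in a compact subsemigroup of `M → M`. -/
lemma exists_idem {Sg : Set (M → M)} (hc : IsCompact Sg) (hne : Sg.Nonempty)
    (hmul : ∀ {f g : M → M}, f ∈ Sg → g ∈ Sg → f ∘ g ∈ Sg) : ∃ u ∈ Sg, u ∘ u = u := by
  haveI : Nonempty Sg := hne.to_subtype
  haveI : CompactSpace Sg := isCompact_iff_compactSpace.mp hc
  letI : Semigroup Sg :=
    { mul := fun f g => ⟨f.1 ∘ g.1, hmul f.2 g.2⟩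
      mul_assoc := fun _ _ _ => Subtype.ext rfl }
  have hcont : ∀ r : Sg, Continuous fun x : Sg => x * r := by
    intro r
    apply Continuous.subtype_mk
    exact continuous_pi fun y => (continuous_apply (r.1 y)).comp continuous_subtype_val
  obtain ⟨m, hm⟩ := exists_idempotent_of_compact_t2_of_continuous_mul_left hcont
  exact ⟨m.1, m.2, congrArg Subtype.val hm⟩

lemma EllisFam.isCompact_closure (hS : EllisFam S) : IsCompact (closure S) :=
  isClosed_closure.isCompact

lemma EllisFam.exists_inv (hS : EllisFam S) {p : M → M} (hp : p ∈ closure S) :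
    ∃ q ∈ closure S, q ∘ p = id ∧ p ∘ q = id := by
  -- left inverses exist for every element of the Ellis semigroup
  have left : ∀ {r : M → M}, r ∈ closure S → ∃ s ∈ closure S, s ∘ r = id := by
    intro r hr
    set Sg : Set (M → M) := (fun f : M → M => f ∘ r) '' closure S with hSgdef
    have hc : IsCompact Sg := hS.isCompact_closure.image (continuous_comp_right r)
    have hne : Sg.Nonempty := ⟨id ∘ r, ⟨id, hS.id_mem_closure, rfl⟩⟩
    have hmul : ∀ {f g : M → M}, f ∈ Sg → g ∈ Sg → f ∘ g ∈ Sg := by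
      rintro _ _ ⟨f, hf, rfl⟩ ⟨g, hg, rfl⟩
      exact ⟨(f ∘ r) ∘ g, hS.comp_mem_closure (hS.comp_mem_closure hf hr) hg, rfl⟩
    obtain ⟨u, ⟨s, hs, rfl⟩, hidem⟩ := exists_idem hc hne hmul
    have : s ∘ r = id := hS.idem_eq_id (hS.comp_mem_closure hs hr) hidem
    exact ⟨s, hs, this⟩
  obtain ⟨q, hq, hqp⟩ := left hp
  refine ⟨q, hq, hqp, ?_⟩
  obtain ⟨s, _, hsq⟩ := left hq
  have hinj : Function.Injective q := by
    intro a b hab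
    have := congrFun hsq a
    have h2 := congrFun hsq b
    simp only [comp_apply, id_eq] at this h2
    rw [← this, ← h2, hab]
  funext a
  apply hinj
  have : q ∘ (p ∘ q) = q := by
    rw [← Function.comp_assoc, hqp, Function.id_comp]
  exact congrFun this a

/-- the orbit of a point under the family. -/
def orb (S : Set (M → M)) (y : M) : Set M := {w | ∃ f ∈ S, f y = w}

lemma EllisFam.eval_mem_closure_orb (hS : EllisFam S) {p : M → M} (hp : p ∈ closure S)
    (y : M) : p y ∈ closure (orb S y) := by
  have h1 : (fun f : M → M => f y) '' closure S ⊆ closure ((fun f : M → M => f y) '' S) :=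
    image_closure_subset_closure_image (continuous_apply y)
  have h2 : (fun f : M → M => f y) '' S = orb S y := by
    ext w; constructor
    · rintro ⟨f, hf, rfl⟩; exact ⟨f, hf, rfl⟩
    · rintro ⟨f, hf, rfl⟩; exact ⟨f, hf, rfl⟩
  rw [← h2]
  exact h1 ⟨p, hp, rfl⟩

lemma EllisFam.mem_closure_orb_iff (hS : EllisFam S) {y w : M}
    (hw : w ∈ closure (orb S y)) : ∃ p ∈ closure S, p y = w := by
  have hcp : IsCompact ((fun f : M → M => f y) '' closure S) :=
    hS.isCompact_closure.image (continuous_apply y)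
  have hcl : IsClosed ((fun f : M → M => f y) '' closure S) := hcp.isClosed
  have hsub : orb S y ⊆ (fun f : M → M => f y) '' closure S := by
    rintro _ ⟨f, hf, rfl⟩; exact ⟨f, subset_closure hf, rfl⟩
  have := (closure_minimal hsub hcl) hw
  obtain ⟨p, hp, hpy⟩ := this
  exact ⟨p, hp, hpy⟩

lemma EllisFam.closure_orb_mono (hS : EllisFam S) {y w : M}
    (hw : w ∈ closure (orb S y)) : closure (orb S w) ⊆ closure (orb S y) := by
  apply closure_minimal _ isClosed_closure
  rintro _ ⟨f, hf, rfl⟩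
  have h1 : f '' closure (orb S y) ⊆ closure (f '' orb S y) :=
    image_closure_subset_closure_image (hS.cont hf)
  have h2 : f '' orb S y ⊆ orb S y := by
    rintro _ ⟨_, ⟨g, hg, rfl⟩, rfl⟩
    exact ⟨f ∘ g, hS.comp hf hg, rfl⟩
  exact closure_mono h2 (h1 ⟨w, hw, rfl⟩)

end Ellis


variable {d : ℕ}

section algebra
variable {X : Type*} [TopologicalSpace X]
@[simp] lemma hmul_apply (f g : X ≃ₜ X) (x : X) : (f * g) x = f (g x) := rfl
@[simp] lemma hone_apply (x : X) : (1 : X ≃ₜ X) x = x := rfl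
variable (T : Fin d → X ≃ₜ X)
def ee (c : Fin d → ℤ) : X ≃ₜ X := ((List.finRange d).map (fun i => T i ^ c i)).prod
def sel (ε : Fin d → Bool) (n : Fin d → ℤ) : Fin d → ℤ := fun i => if ε i then n i else 0
lemma cubeMap_eq_ee_sel (n : Fin d → ℤ) (ε : Fin d → Bool) :
    cubeMap T n ε = ee T (sel ε n) := rfl
lemma ee_zero : ee T 0 = 1 := by
  simp only [ee]; exact List.prod_eq_one (by simp)
lemma sel_zero (ε : Fin d → Bool) : sel ε (0 : Fin d → ℤ) = 0 := by funext i; simp [sel]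
lemma sel_add (ε : Fin d → Bool) (a b : Fin d → ℤ) :
    sel ε (a + b) = sel ε a + sel ε b := by
  funext i; by_cases h : ε i <;> simp [sel, h]

variable (hcomm : ∀ i j : Fin d, ∀ x : X, T i (T j x) = T j (T i x))
include hcomm
lemma commute_T (i i' : Fin d) : Commute (T i) (T i') :=
  Homeomorph.ext fun x => hcomm i i' x
lemma prod_zpow_add (l : List (Fin d)) (a b : Fin d → ℤ) :
    (l.map fun i => T i ^ (a i + b i)).prod
      = (l.map fun i => T i ^ a i).prod * (l.map fun i => T i ^ b i).prod := by
  induction l with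
  | nil => simp
  | cons hd tl ih =>
      simp only [List.map_cons, List.prod_cons, ih]
      rw [zpow_add]
      have hcb : Commute (T hd ^ b hd) (tl.map fun i => T i ^ a i).prod := by
        apply Commute.list_prod_right
        intro y hy
        obtain ⟨i, _, rfl⟩ := List.mem_map.mp hy
        exact (commute_T T hcomm hd i).zpow_zpow _ _
      rw [mul_assoc, mul_assoc, ← mul_assoc (T hd ^ b hd), hcb.eq, mul_assoc]
lemma ee_add (a b : Fin d → ℤ) : ee T (a + b) = ee T a * ee T b := by
  simpa [ee] using prod_zpow_add T hcomm (List.finRange d) a b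
lemma commute_gen_T {g : X ≃ₜ X} (hg : g ∈ genGroup T) (i : Fin d) : Commute g (T i) := by
  induction hg using Subgroup.closure_induction with
  | mem x hx => obtain ⟨i', rfl⟩ := hx; exact commute_T T hcomm i' i
  | one => exact Commute.one_left _
  | mul x y hx hy ihx ihy => exact ihx.mul_left ihy
  | inv x hx ihx => exact ihx.inv_left
lemma commute_gen_ee {g : X ≃ₜ X} (hg : g ∈ genGroup T) (c : Fin d → ℤ) :
    Commute g (ee T c) := by
  apply Commute.list_prod_right
  intro y hy
  obtain ⟨i, _, rfl⟩ := List.mem_map.mp hy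
  exact (commute_gen_T T hcomm hg i).zpow_right _
omit hcomm in
lemma ee_mem (c : Fin d → ℤ) : ee T c ∈ genGroup T := by
  apply Subgroup.list_prod_mem
  intro x hx
  obtain ⟨i, _, rfl⟩ := List.mem_map.mp hx
  exact zpow_mem (Subgroup.subset_closure (Set.mem_range_self i)) _
end algebra

/-! ### The concrete families -/

section conc
variable {X : Type*} [MetricSpace X] [CompactSpace X]
variable (T : Fin d → X ≃ₜ X)

/-- generating cube points -/
def genpt (n : Fin d → ℤ) (x : X) : (Fin d → Bool) → X := fun ε => ee T (sel ε n) x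

def genSet : Set ((Fin d → Bool) → X) := {z | ∃ (x : X) (n : Fin d → ℤ), z = genpt T n x}

lemma cubes_eq_closure : cubes T = closure (genSet T) := by
  have h : {y : (Fin d → Bool) → X | ∃ (x : X) (n : Fin d → ℤ), ∀ ε, y ε = cubeMap T n ε x}
      = genSet T := by
    ext z
    constructor
    · rintro ⟨x, n, h⟩; exact ⟨x, n, funext fun ε => h ε⟩
    · rintro ⟨x, n, rfl⟩; exact ⟨x, n, fun ε => rfl⟩
  unfold cubes
  rw [h]

/-- the basic coordinatewise maps -/
def kmap (g : X ≃ₜ X) (m : Fin d → ℤ) : ((Fin d → Bool) → X) → ((Fin d → Bool) → X) :=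
  fun z ε => (g * ee T (sel ε m)) (z ε)

def K2 : Set (((Fin d → Bool) → X) → ((Fin d → Bool) → X)) :=
  {f | ∃ g ∈ genGroup T, ∃ m : Fin d → ℤ, f = kmap T g m}

def K1 (j : Fin d) : Set (((Fin d → Bool) → X) → ((Fin d → Bool) → X)) :=
  {f | ∃ g ∈ genGroup T, ∃ m : Fin d → ℤ, m j = 0 ∧ f = kmap T g m}

def GX : Set (X → X) := {f | ∃ g ∈ genGroup T, f = ⇑g}

lemma kmap_continuous (g : X ≃ₜ X) (m : Fin d → ℤ) : Continuous (kmap T g m) :=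
  continuous_pi fun ε => ((g * ee T (sel ε m)).continuous).comp (continuous_apply ε)

lemma kmap_id : kmap T 1 0 = id := by
  funext z ε
  simp [kmap, sel_zero, ee_zero]

variable (hcomm : ∀ i j : Fin d, ∀ x : X, T i (T j x) = T j (T i x))
include hcomm

lemma kmap_comp (g g' : X ≃ₜ X) (hg' : g' ∈ genGroup T) (m m' : Fin d → ℤ) :
    kmap T g m ∘ kmap T g' m' = kmap T (g * g') (m + m') := by
  funext z ε
  show (g * ee T (sel ε m)) ((g' * ee T (sel ε m')) (z ε)) = _
  have : g * ee T (sel ε m) * (g' * ee T (sel ε m')) = g * g' * ee T (sel ε (m + m')) := by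
    rw [sel_add, ee_add T hcomm]
    have hc : Commute (ee T (sel ε m)) g' := (commute_gen_ee T hcomm hg' _).symm
    rw [mul_assoc g, ← mul_assoc (ee T (sel ε m)), hc.eq, mul_assoc, mul_assoc, ← mul_assoc g]
  rw [← hmul_apply, this]; rfl

lemma kmap_genpt {g : X ≃ₜ X} (hg : g ∈ genGroup T) (m n : Fin d → ℤ) (x : X) :
    kmap T g m (genpt T n x) = genpt T (m + n) (g x) := by
  funext ε
  show (g * ee T (sel ε m)) (ee T (sel ε n) x) = ee T (sel ε (m + n)) (g x)
  rw [← hmul_apply, ← hmul_apply, mul_assoc, ← ee_add T hcomm, ← sel_add,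
    (commute_gen_ee T hcomm hg (sel ε (m + n))).eq]

omit hcomm in
lemma K1_sub_K2 (j : Fin d) : K1 T j ⊆ K2 T := by
  rintro f ⟨g, hg, m, _, rfl⟩; exact ⟨g, hg, m, rfl⟩

omit hcomm in
lemma const_eq_genpt (x : X) : (fun _ => x : (Fin d → Bool) → X) = genpt T 0 x := by
  funext ε; simp [genpt, sel_zero, ee_zero]

omit hcomm in
lemma const_mem_Q (x : X) : (fun _ => x : (Fin d → Bool) → X) ∈ cubes T := by
  rw [cubes_eq_closure, const_eq_genpt T x]
  exact subset_closure ⟨x, 0, rfl⟩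

variable (hdist : IsDistalSystem T)
include hdist

lemma famK2 : EllisFam (K2 T) where
  idm := ⟨1, one_mem _, 0, (kmap_id T).symm⟩
  comp := by
    rintro _ _ ⟨g1, hg1, m1, rfl⟩ ⟨g2, hg2, m2, rfl⟩
    exact ⟨g1 * g2, mul_mem hg1 hg2, m1 + m2, kmap_comp T hcomm g1 g2 hg2 m1 m2⟩
  cont := by rintro _ ⟨g, hg, m, rfl⟩; exact kmap_continuous T g m
  distal := by
    intro a b hab
    obtain ⟨ε₀, hε₀⟩ := Function.ne_iff.mp hab
    obtain ⟨δ, hδ, hd⟩ := hdist _ _ hε₀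
    refine ⟨δ, hδ, ?_⟩
    rintro _ ⟨g, hg, m, rfl⟩
    calc δ ≤ dist ((g * ee T (sel ε₀ m)) (a ε₀)) ((g * ee T (sel ε₀ m)) (b ε₀)) :=
          hd _ (mul_mem hg (ee_mem T _))
    _ ≤ dist (kmap T g m a) (kmap T g m b) := by exact dist_le_pi_dist (kmap T g m a) (kmap T g m b) ε₀

lemma famK1 (j : Fin d) : EllisFam (K1 T j) where
  idm := ⟨1, one_mem _, 0, rfl, (kmap_id T).symm⟩
  comp := by
    rintro _ _ ⟨g1, hg1, m1, h1, rfl⟩ ⟨g2, hg2, m2, h2, rfl⟩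
    refine ⟨g1 * g2, mul_mem hg1 hg2, m1 + m2, ?_, kmap_comp T hcomm g1 g2 hg2 m1 m2⟩
    simp [h1, h2]
  cont := by rintro _ ⟨g, hg, m, _, rfl⟩; exact kmap_continuous T g m
  distal := fun a b hab => (famK2 T hcomm hdist).distal a b hab |>.imp
    (fun δ h => ⟨h.1, fun f hf => h.2 f (K1_sub_K2 T j hf)⟩)

omit hcomm in
lemma famGX : EllisFam (GX T) where
  idm := ⟨1, one_mem _, rfl⟩
  comp := by
    rintro _ _ ⟨g1, hg1, rfl⟩ ⟨g2, hg2, rfl⟩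
    exact ⟨g1 * g2, mul_mem hg1 hg2, rfl⟩
  cont := by rintro _ ⟨g, hg, rfl⟩; exact g.continuous
  distal := by
    intro a b hab
    obtain ⟨δ, hδ, hd⟩ := hdist a b hab
    exact ⟨δ, hδ, by rintro _ ⟨g, hg, rfl⟩; exact hd g hg⟩

omit hcomm hdist in
include hcomm in
lemma kmap_mem_Q {g : X ≃ₜ X} (hg : g ∈ genGroup T) (m : Fin d → ℤ)
    {z : (Fin d → Bool) → X} (hz : z ∈ cubes T) : kmap T g m z ∈ cubes T := by
  rw [cubes_eq_closure] at hz ⊢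
  have h1 := image_closure_subset_closure_image (kmap_continuous T g m) ⟨z, hz, rfl⟩
  refine closure_mono ?_ h1
  rintro _ ⟨w, ⟨x, n, rfl⟩, rfl⟩
  exact ⟨g x, m + n, kmap_genpt T hcomm hg m n x⟩

omit hcomm hdist in
include hcomm in
lemma E2_preserves_Q {p : ((Fin d → Bool) → X) → ((Fin d → Bool) → X)}
    (hp : p ∈ closure (K2 T)) {z : (Fin d → Bool) → X} (hz : z ∈ cubes T) :
    p z ∈ cubes T := by
  have hA : IsClosed {f : ((Fin d → Bool) → X) → ((Fin d → Bool) → X) | f z ∈ cubes T} := by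
    have : IsClosed (cubes T) := isClosed_closure
    exact this.preimage (continuous_apply z)
  have hK : K2 T ⊆ {f | f z ∈ cubes T} := by
    rintro _ ⟨g, hg, m, rfl⟩; exact kmap_mem_Q T hcomm hg m hz
  exact closure_minimal hK hA hp

omit hcomm hdist in
include hcomm in
lemma genpt_cont (n : Fin d → ℤ) : Continuous fun x : X => genpt T n x :=
  continuous_pi fun ε => (ee T (sel ε n)).continuous

variable (hmin : IsMinimalSystem T)
include hmin

omit hdist in
lemma genpt_mem_orb_const (n : Fin d → ℤ) (x x₀ : X) :
    genpt T n x ∈ closure (orb (K2 T) (fun _ => x₀)) := by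
  have hx : x ∈ closure {y : X | ∃ g ∈ genGroup T, g x₀ = y} := hmin x₀ x
  have h1 : genpt T n x ∈ closure ((fun y : X => genpt T n y) ''
      {y : X | ∃ g ∈ genGroup T, g x₀ = y}) :=
    image_closure_subset_closure_image (genpt_cont T hcomm n) ⟨x, hx, rfl⟩
  refine closure_mono ?_ h1
  rintro _ ⟨_, ⟨g, hg, rfl⟩, rfl⟩
  refine ⟨kmap T g n, ⟨g, hg, n, rfl⟩, ?_⟩
  rw [const_eq_genpt T x₀, kmap_genpt T hcomm hg n 0 x₀, add_zero]

omit hdist in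
lemma Q_sub_orb_const (x₀ : X) :
    cubes T ⊆ closure (orb (K2 T) (fun _ => x₀)) := by
  rw [cubes_eq_closure]
  refine closure_minimal ?_ isClosed_closure
  rintro _ ⟨x, n, rfl⟩
  exact genpt_mem_orb_const T hcomm hmin n x x₀

lemma Q_reach {z w : (Fin d → Bool) → X} (hz : z ∈ cubes T) (hw : w ∈ cubes T) :
    ∃ p ∈ closure (K2 T), p z = w := by
  set x₀ : X := z (fun _ => false) with hx₀
  have hfam := famK2 T hcomm hdist
  have h1 : z ∈ closure (orb (K2 T) (fun _ => x₀)) := Q_sub_orb_const T hcomm hmin x₀ hz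
  obtain ⟨p, hp, hpz⟩ := hfam.mem_closure_orb_iff h1
  obtain ⟨q, hq, hqp, _⟩ := hfam.exists_inv hp
  have h2 : q z ∈ closure (orb (K2 T) z) := hfam.eval_mem_closure_orb hq z
  have hqz : q z = fun _ => x₀ := by
    rw [← hpz]; exact congrFun hqp _
  rw [hqz] at h2
  have h3 : cubes T ⊆ closure (orb (K2 T) z) :=
    (Q_sub_orb_const T hcomm hmin x₀).trans (hfam.closure_orb_mono h2)
  exact hfam.mem_closure_orb_iff (h3 hw)

end conc

/-! ### doubling maps and the diagonal set -/

section dsec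
variable {X : Type*} [MetricSpace X] [CompactSpace X]
variable (T : Fin d → X ≃ₜ X) (j : Fin d)

/-- duplicate upper face -/
def updub : ((Fin d → Bool) → X) → ((Fin d → Bool) → X) :=
  fun z ε => z (Function.update ε j true)

/-- duplicate lower face -/
def lowdub : ((Fin d → Bool) → X) → ((Fin d → Bool) → X) :=
  fun z ε => z (Function.update ε j false)

lemma updub_cont : Continuous (updub (X := X) j) :=
  continuous_pi fun ε => continuous_apply _

lemma lowdub_cont : Continuous (lowdub (X := X) j) :=
  continuous_pi fun ε => continuous_apply _

variable (hcomm : ∀ i j : Fin d, ∀ x : X, T i (T j x) = T j (T i x))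
include hcomm

lemma sel_update_true (ε : Fin d → Bool) (n : Fin d → ℤ) :
    sel (Function.update ε j true) n
      = sel ε (Function.update n j 0) + (fun i => if i = j then n j else 0) := by
  funext i
  by_cases h : i = j
  · subst h; simp [sel, Function.update_self]
  · simp [sel, Function.update_of_ne h, h]

lemma sel_update_false (ε : Fin d → Bool) (n : Fin d → ℤ) :
    sel (Function.update ε j false) n = sel ε (Function.update n j 0) := by
  funext i
  by_cases h : i = j
  · subst h; simp [sel, Function.update_self]
  · simp [sel, Function.update_of_ne h, h]

lemma updub_genpt (n : Fin d → ℤ) (x : X) :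
    updub j (genpt T n x)
      = genpt T (Function.update n j 0) (ee T (fun i => if i = j then n j else 0) x) := by
  funext ε
  show ee T (sel (Function.update ε j true) n) x = _
  rw [sel_update_true T j hcomm, ee_add T hcomm]
  rfl

lemma lowdub_genpt (n : Fin d → ℤ) (x : X) :
    lowdub j (genpt T n x) = genpt T (Function.update n j 0) x := by
  funext ε
  show ee T (sel (Function.update ε j false) n) x = _
  rw [sel_update_false T j hcomm]
  rfl

lemma updub_mem_Q {z : (Fin d → Bool) → X} (hz : z ∈ cubes T) : updub j z ∈ cubes T := by
  rw [cubes_eq_closure] at hz ⊢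
  have h1 := image_closure_subset_closure_image (updub_cont (X := X) j) ⟨z, hz, rfl⟩
  refine closure_mono ?_ h1
  rintro _ ⟨w, ⟨x, n, rfl⟩, rfl⟩
  exact ⟨_, _, updub_genpt T j hcomm n x⟩

lemma lowdub_mem_Q {z : (Fin d → Bool) → X} (hz : z ∈ cubes T) : lowdub j z ∈ cubes T := by
  rw [cubes_eq_closure] at hz ⊢
  have h1 := image_closure_subset_closure_image (lowdub_cont (X := X) j) ⟨z, hz, rfl⟩
  refine closure_mono ?_ h1
  rintro _ ⟨w, ⟨x, n, rfl⟩, rfl⟩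
  exact ⟨_, _, lowdub_genpt T j hcomm n x⟩

/-- the set of doubled cubes -/
def Dset : Set ((Fin d → Bool) → X) :=
  {z | z ∈ cubes T ∧ ∀ ε, z ε = z (Function.update ε j true)}

omit hcomm in
lemma Dset_eq_updub {z : (Fin d → Bool) → X} (hz : z ∈ Dset T j) : updub j z = z := by
  funext ε
  exact (hz.2 ε).symm

/-- Every doubled cube is in the closure of the `K1`-orbit of any constant cube. -/
lemma Dset_sub_orb_const (hmin : IsMinimalSystem T) (x₀ : X) :
    Dset T j ⊆ closure (orb (K1 T j) (fun _ => x₀)) := by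
  intro z hz
  have hzQ : z ∈ closure (genSet T) := by rw [← cubes_eq_closure]; exact hz.1
  have h1 : updub j z ∈ closure (updub j '' genSet T) :=
    image_closure_subset_closure_image (updub_cont (X := X) j) ⟨z, hzQ, rfl⟩
  rw [Dset_eq_updub T j hz] at h1
  have hsub : updub j '' genSet T ⊆ closure (orb (K1 T j) (fun _ => x₀)) := by
    rintro _ ⟨_, ⟨x, n, rfl⟩, rfl⟩
    rw [updub_genpt T j hcomm n x]
    set m := Function.update n j 0 with hm
    set x' := ee T (fun i => if i = j then n j else 0) x with hx'
    have hx : x' ∈ closure {y : X | ∃ g ∈ genGroup T, g x₀ = y} := hmin x₀ x'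
    have h2 : genpt T m x' ∈ closure ((fun y : X => genpt T m y) ''
        {y : X | ∃ g ∈ genGroup T, g x₀ = y}) :=
      image_closure_subset_closure_image (genpt_cont T hcomm m) ⟨x', hx, rfl⟩
    refine closure_mono ?_ h2
    rintro _ ⟨_, ⟨g, hg, rfl⟩, rfl⟩
    refine ⟨kmap T g m, ⟨g, hg, m, by simp [hm], rfl⟩, ?_⟩
    rw [const_eq_genpt T x₀, kmap_genpt T hcomm hg m 0 x₀, add_zero]
  exact closure_minimal hsub isClosed_closure h1

/-- reach the constant cube from any doubled cube by an `E1` element. -/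
lemma D_reach (hmin : IsMinimalSystem T) (hdist : IsDistalSystem T)
    {z : (Fin d → Bool) → X} (hz : z ∈ Dset T j) (x : X) :
    ∃ p ∈ closure (K1 T j), p z = fun _ => x := by
  have hfam := famK1 T hcomm hdist j
  have h1 : z ∈ closure (orb (K1 T j) (fun _ => x)) :=
    Dset_sub_orb_const T j hcomm hmin x hz
  obtain ⟨p, hp, hpz⟩ := hfam.mem_closure_orb_iff h1
  obtain ⟨q, hq, hqp, _⟩ := hfam.exists_inv hp
  refine ⟨q, hq, ?_⟩
  rw [← hpz]
  exact congrFun hqp _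

end dsec

/-! ### coordinate maps -/

section cw
variable {X : Type*} [MetricSpace X] [CompactSpace X]
variable (T : Fin d → X ≃ₜ X)

/-- the coordinate map of an Ellis element -/
def pc (p : ((Fin d → Bool) → X) → ((Fin d → Bool) → X)) (ε : Fin d → Bool) : X → X :=
  fun ξ => p (fun _ => ξ) ε

lemma coordwise {p : ((Fin d → Bool) → X) → ((Fin d → Bool) → X)}
    (hp : p ∈ closure (K2 T)) (z : (Fin d → Bool) → X) (ε : Fin d → Bool) :
    p z ε = pc p ε (z ε) := by
  have hA : IsClosed {f : ((Fin d → Bool) → X) → ((Fin d → Bool) → X) |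
      ∀ z ε, f z ε = f (fun _ => z ε) ε} := by
    have : {f : ((Fin d → Bool) → X) → ((Fin d → Bool) → X) |
        ∀ z ε, f z ε = f (fun _ => z ε) ε}
        = ⋂ (z : (Fin d → Bool) → X), ⋂ (ε : Fin d → Bool),
          {f | f z ε = f (fun _ => z ε) ε} := by
      ext f; simp [mem_iInter]
    rw [this]
    refine isClosed_iInter fun z => isClosed_iInter fun ε => isClosed_eq ?_ ?_
    · exact (continuous_apply ε).comp (continuous_apply z)
    · exact (continuous_apply ε).comp (continuous_apply _)
  have hK : K2 T ⊆ {f | ∀ z ε, f z ε = f (fun _ => z ε) ε} := by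
    rintro _ ⟨g, hg, m, rfl⟩
    intro z ε
    rfl
  exact closure_minimal hK hA hp z ε

lemma pc_mem_EX {p : ((Fin d → Bool) → X) → ((Fin d → Bool) → X)}
    (hp : p ∈ closure (K2 T)) (ε : Fin d → Bool) : pc p ε ∈ closure (GX T) := by
  have hΨ : Continuous fun f : ((Fin d → Bool) → X) → ((Fin d → Bool) → X) =>
      (fun ξ : X => f (fun _ => ξ) ε) :=
    continuous_pi fun ξ => (continuous_apply ε).comp (continuous_apply _)
  have h1 : pc p ε ∈ closure ((fun f : ((Fin d → Bool) → X) → ((Fin d → Bool) → X) =>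
      (fun ξ : X => f (fun _ => ξ) ε)) '' K2 T) :=
    image_closure_subset_closure_image hΨ ⟨p, hp, rfl⟩
  refine closure_mono ?_ h1
  rintro _ ⟨_, ⟨g, hg, m, rfl⟩, rfl⟩
  exact ⟨g * ee T (sel ε m), mul_mem hg (ee_mem T _), rfl⟩

lemma pc_comp {p q : ((Fin d → Bool) → X) → ((Fin d → Bool) → X)}
    (hp : p ∈ closure (K2 T)) (ε : Fin d → Bool) (ξ : X) :
    pc (p ∘ q) ε ξ = pc p ε (pc q ε ξ) := by
  show p (q (fun _ => ξ)) ε = _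
  rw [coordwise T hp (q (fun _ => ξ)) ε]
  rfl

lemma pc_id (ε : Fin d → Bool) (ξ : X) : pc (id : ((Fin d → Bool) → X) → _) ε ξ = ξ := rfl

/-- diagonal extension of a map on `X` -/
def diagmap (s : X → X) : ((Fin d → Bool) → X) → ((Fin d → Bool) → X) :=
  fun z ε => s (z ε)

variable (j : Fin d)
variable (hcomm : ∀ i j : Fin d, ∀ x : X, T i (T j x) = T j (T i x))
include hcomm

lemma diagmap_mem_E1 {s : X → X} (hs : s ∈ closure (GX T)) :
    diagmap s ∈ closure (K1 T j) := by
  have hΘ : Continuous fun s : X → X => (diagmap s : ((Fin d → Bool) → X) → _) :=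
    continuous_pi fun z => continuous_pi fun ε => continuous_apply (z ε)
  have h1 : diagmap s ∈ closure ((fun s : X → X =>
      (diagmap s : ((Fin d → Bool) → X) → _)) '' GX T) :=
    image_closure_subset_closure_image hΘ ⟨s, hs, rfl⟩
  refine closure_mono ?_ h1
  rintro _ ⟨_, ⟨g, hg, rfl⟩, rfl⟩
  refine ⟨g, hg, 0, rfl, ?_⟩
  funext z ε
  show g (z ε) = (g * ee T (sel ε 0)) (z ε)
  rw [sel_zero, ee_zero, mul_one]

omit hcomm in
lemma pc_diagmap (s : X → X) (ε : Fin d → Bool) (ξ : X) : pc (diagmap s) ε ξ = s ξ := rfl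

/-- doubling of an Ellis element along the lower face in direction `j` -/
def dub (f : ((Fin d → Bool) → X) → ((Fin d → Bool) → X)) :
    ((Fin d → Bool) → X) → ((Fin d → Bool) → X) :=
  fun z ε => f (fun ε' => z (Function.update ε' j (ε j))) (Function.update ε j false)

lemma dub_kmap (g : X ≃ₜ X) (m : Fin d → ℤ) :
    dub j (kmap T g m) = kmap T g (Function.update m j 0) := by
  funext z ε
  show (g * ee T (sel (Function.update ε j false) m))
      (z (Function.update (Function.update ε j false) j (ε j))) = _
  rw [Function.update_idem, Function.update_eq_self, sel_update_false T j hcomm]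
  rfl

lemma dub_mem_E1 {f : ((Fin d → Bool) → X) → ((Fin d → Bool) → X)}
    (hf : f ∈ closure (K2 T)) : dub j f ∈ closure (K1 T j) := by
  have hD : Continuous fun f : ((Fin d → Bool) → X) → ((Fin d → Bool) → X) =>
      dub (X := X) j f := by
    apply continuous_pi; intro z
    apply continuous_pi; intro ε
    exact (continuous_apply _).comp (continuous_apply _)
  have h1 : dub j f ∈ closure ((fun f => dub (X := X) j f) '' K2 T) :=
    image_closure_subset_closure_image hD ⟨f, hf, rfl⟩
  refine closure_mono ?_ h1
  rintro _ ⟨_, ⟨g, hg, m, rfl⟩, rfl⟩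
  exact ⟨g, hg, Function.update m j 0, Function.update_self _ _ _, dub_kmap T j hcomm g m⟩

omit hcomm in
lemma pc_dub (f : ((Fin d → Bool) → X) → ((Fin d → Bool) → X)) (ε : Fin d → Bool) (ξ : X) :
    pc (dub j f) ε ξ = pc f (Function.update ε j false) ξ := rfl

end cw

/-! ### index bookkeeping -/

section idx
variable {d : ℕ} (j : Fin d)

lemma update_empty_false :
    Function.update (fun _ => false : Fin d → Bool) j false = fun _ => false := by
  funext i; by_cases h : i = j <;> simp [Function.update_apply, h]

lemma update_empty_true :
    Function.update (fun _ => false : Fin d → Bool) j true = fun i => decide (i = j) := by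
  funext i; by_cases h : i = j <;> simp [Function.update_apply, h]

lemma update_sj_false :
    Function.update (fun i => decide (i = j)) j false = (fun _ => false : Fin d → Bool) := by
  funext i; by_cases h : i = j <;> simp [Function.update_apply, h]

lemma update_sj_true :
    Function.update (fun i => decide (i = j)) j true = (fun i => decide (i = j)) := by
  funext i; by_cases h : i = j <;> simp [Function.update_apply, h]

lemma update_true_of_true {ε : Fin d → Bool} (hj : ε j = true) :
    Function.update ε j true = ε := by
  conv_lhs => rw [← hj]
  exact Function.update_eq_self j ε

lemma update_false_of_false {ε : Fin d → Bool} (hj : ε j = false) :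
    Function.update ε j false = ε := by
  conv_lhs => rw [← hj]
  exact Function.update_eq_self j ε

lemma update_ne_empty {ε : Fin d → Bool} (hj : ε j = true)
    (hne : ε ≠ fun i => decide (i = j)) :
    Function.update ε j false ≠ (fun _ => false) := by
  obtain ⟨i, hi⟩ := Function.ne_iff.mp hne
  have hij : i ≠ j := by
    rintro rfl
    exact hi (by simp [hj])
  have hεi : ε i = true := by
    cases h : ε i
    · exact absurd (by simp [h, hij]) hi
    · rfl
  intro hcon
  have := congrFun hcon i
  rw [Function.update_of_ne hij, hεi] at this
  exact Bool.noConfusion this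

lemma update_true_ne_sj {ε : Fin d → Bool} (hj : ε j = false)
    (hne : ε ≠ fun _ => false) :
    Function.update ε j true ≠ fun i => decide (i = j) := by
  obtain ⟨i, hi⟩ := Function.ne_iff.mp hne
  have hij : i ≠ j := by
    rintro rfl
    exact hi (by simp [hj])
  have hεi : ε i = true := by
    cases h : ε i
    · exact absurd (by simp [h]) hi
    · rfl
  intro hcon
  have := congrFun hcon i
  rw [Function.update_of_ne hij, hεi] at this
  simp [hij] at this

end idx

/-! ### the canonicalization lemma -/

section c3
variable {X : Type*} [MetricSpace X] [CompactSpace X]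
variable (T : Fin d → X ≃ₜ X) (j : Fin d)
variable (hcomm : ∀ i j : Fin d, ∀ x : X, T i (T j x) = T j (T i x))
variable (hmin : IsMinimalSystem T) (hdist : IsDistalSystem T)
include hcomm hmin hdist

lemma C3 {x y : X} (hxy : (x, y) ∈ relRT T j) :
    ∃ v ∈ closure (K2 T),
      (∀ ε : Fin d → Bool, ε j = false → ∀ ξ : X, pc v ε ξ = ξ) ∧
      (∀ ε : Fin d → Bool, ε j = true → ε ≠ (fun i => decide (i = j)) → pc v ε x = x) ∧
      pc v (fun i => decide (i = j)) x = y := by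
  obtain ⟨z, hzQ, hz0, hzj, hglue⟩ := hxy
  have hfam2 := famK2 T hcomm hdist
  have hfam1 := famK1 T hcomm hdist j
  have hfamX := famGX T hdist
  have hE1sub : closure (K1 T j) ⊆ closure (K2 T) := closure_mono (K1_sub_K2 T j)
  set zh : (Fin d → Bool) → X := lowdub j z with hzh
  have hzhQ : zh ∈ cubes T := lowdub_mem_Q T j hcomm hzQ
  have hzhD : zh ∈ Dset T j := by
    refine ⟨hzhQ, fun ε => ?_⟩
    show z (Function.update ε j false)
      = z (Function.update (Function.update ε j true) j false)
    rw [Function.update_idem]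
  have hzh0 : zh (fun _ => false) = x := by
    show z (Function.update (fun _ => false) j false) = x
    rw [update_empty_false j, hz0]
  have hzhsj : zh (fun i => decide (i = j)) = x := by
    show z (Function.update (fun i => decide (i = j)) j false) = x
    rw [update_sj_false j, hz0]
  obtain ⟨P₁, hP₁, hP₁z⟩ := Q_reach T hcomm hdist hmin hzhQ hzQ
  have hpL : dub j P₁ ∈ closure (K1 T j) := dub_mem_E1 T j hcomm hP₁
  have hpLz : dub j P₁ zh = zh := by
    funext ε
    show P₁ (fun ε' => zh (Function.update ε' j (ε j))) (Function.update ε j false) = zh ε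
    have harg : (fun ε' => zh (Function.update ε' j (ε j))) = zh := by
      funext ε'
      show z (Function.update (Function.update ε' j (ε j)) j false)
        = z (Function.update ε' j false)
      rw [Function.update_idem]
    rw [harg, hP₁z]
    rfl
  obtain ⟨pL', hpL'mem, hpLinv1, hpLinv2⟩ := hfam1.exists_inv hpL
  have hpL'z : pL' zh = zh := by
    conv_lhs => rw [← hpLz]
    exact congrFun hpLinv1 zh
  set v0 := P₁ ∘ pL' with hv0
  have hv0mem : v0 ∈ closure (K2 T) := hfam2.comp_mem_closure hP₁ (hE1sub hpL'mem)
  have hv0z : v0 zh = z := by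
    show P₁ (pL' zh) = z
    rw [hpL'z, hP₁z]
  have hv0low : ∀ ε : Fin d → Bool, ε j = false → ∀ ξ, pc v0 ε ξ = ξ := by
    intro ε hε ξ
    have h1 : pc v0 ε ξ = pc P₁ ε (pc pL' ε ξ) := pc_comp T hP₁ ε ξ
    have h2 : pc (dub j P₁ ∘ pL') ε ξ = ξ := by rw [hpLinv2]; rfl
    rw [pc_comp T (hE1sub hpL) ε ξ] at h2
    have h4 : pc (dub j P₁) ε (pc pL' ε ξ)
        = pc P₁ (Function.update ε j false) (pc pL' ε ξ) := pc_dub j P₁ ε _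
    rw [h4, update_false_of_false j hε] at h2
    rw [h1]; exact h2
  obtain ⟨p, hpmem, hpz⟩ := D_reach T j hcomm hmin hdist hzhD x
  obtain ⟨p', hp'mem, hpinv1, hpinv2⟩ := hfam1.exists_inv hpmem
  have hpE2 : p ∈ closure (K2 T) := hE1sub hpmem
  have hp'E2 : p' ∈ closure (K2 T) := hE1sub hp'mem
  have hpc_p : ∀ ε, pc p ε (zh ε) = x := by
    intro ε
    have h := congrFun hpz ε
    rwa [coordwise T hpE2 zh ε] at h
  have hpc_p' : ∀ ε, pc p' ε x = zh ε := by
    intro ε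
    rw [← hpc_p ε]
    have h2 : pc (p' ∘ p) ε (zh ε) = zh ε := by rw [hpinv1]; rfl
    rw [pc_comp T hp'E2 ε (zh ε)] at h2
    exact h2
  set vt := p ∘ (v0 ∘ p') with hvt
  have hvtmem : vt ∈ closure (K2 T) :=
    hfam2.comp_mem_closure hpE2 (hfam2.comp_mem_closure hv0mem hp'E2)
  have hvt_pc : ∀ ε ξ, pc vt ε ξ = pc p ε (pc v0 ε (pc p' ε ξ)) := by
    intro ε ξ
    calc pc (p ∘ (v0 ∘ p')) ε ξ = pc p ε (pc (v0 ∘ p') ε ξ) := pc_comp T hpE2 ε ξ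
    _ = pc p ε (pc v0 ε (pc p' ε ξ)) := by rw [pc_comp T hv0mem ε ξ]
  have hvtlow : ∀ ε : Fin d → Bool, ε j = false → ∀ ξ, pc vt ε ξ = ξ := by
    intro ε hε ξ
    rw [hvt_pc, hv0low ε hε]
    have h2 : pc (p ∘ p') ε ξ = ξ := by rw [hpinv2]; rfl
    rw [pc_comp T hpE2 ε ξ] at h2
    exact h2
  have hvtup : ∀ ε : Fin d → Bool, ε j = true → ε ≠ (fun i => decide (i = j)) →
      pc vt ε x = x := by
    intro ε hεj hεne
    rw [hvt_pc, hpc_p' ε]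
    have h1 : pc v0 ε (zh ε) = z ε := by
      rw [← coordwise T hv0mem zh ε, hv0z]
    rw [h1]
    have hε' : z ε = zh ε := by
      have hne : Function.update ε j false ≠ (fun _ => false) := update_ne_empty j hεj hεne
      have hj' : (Function.update ε j false) j = false := Function.update_self _ _ _
      have hg := hglue (Function.update ε j false) hj' hne
      rw [Function.update_idem, update_true_of_true j hεj] at hg
      exact hg.symm
    rw [hε']
    exact hpc_p ε
  have hvtsj : pc vt (fun i => decide (i = j)) x = pc p (fun i => decide (i = j)) y := by
    rw [hvt_pc, hpc_p' _]
    have h1 : pc v0 (fun i => decide (i = j)) (zh (fun i => decide (i = j)))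
        = z (fun i => decide (i = j)) := by
      rw [← coordwise T hv0mem zh _, hv0z]
    rw [h1, hzj]
  set q := pc p (fun i => decide (i = j)) with hq
  have hqEX : q ∈ closure (GX T) := pc_mem_EX T hpE2 _
  have hqx : q x = x := by
    have h := hpc_p (fun i => decide (i = j))
    rwa [hzhsj] at h
  obtain ⟨q', hq'EX, hqinv1, hqinv2⟩ := hfamX.exists_inv hqEX
  have hq'x : q' x = x := by
    conv_lhs => rw [← hqx]
    exact congrFun hqinv1 x
  set v := diagmap q' ∘ (vt ∘ diagmap q) with hv
  have hdq : diagmap q ∈ closure (K2 T) := hE1sub (diagmap_mem_E1 T j hcomm hqEX)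
  have hdq' : diagmap q' ∈ closure (K2 T) := hE1sub (diagmap_mem_E1 T j hcomm hq'EX)
  have hvmem : v ∈ closure (K2 T) :=
    hfam2.comp_mem_closure hdq' (hfam2.comp_mem_closure hvtmem hdq)
  have hv_pc : ∀ ε ξ, pc v ε ξ = q' (pc vt ε (q ξ)) := by
    intro ε ξ
    calc pc (diagmap q' ∘ (vt ∘ diagmap q)) ε ξ
        = pc (diagmap q') ε (pc (vt ∘ diagmap q) ε ξ) := pc_comp T hdq' ε ξ
    _ = q' (pc vt ε (pc (diagmap q) ε ξ)) := by rw [pc_comp T hvtmem ε ξ]; rfl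
    _ = q' (pc vt ε (q ξ)) := rfl
  refine ⟨v, hvmem, ?_, ?_, ?_⟩
  · intro ε hε ξ
    rw [hv_pc, hvtlow ε hε]
    exact congrFun hqinv1 ξ
  · intro ε hεj hεne
    rw [hv_pc, hqx, hvtup ε hεj hεne, hq'x]
  · rw [hv_pc, hqx, hvtsj]
    exact congrFun hqinv1 y

end c3

/-! ### the relation lemmas -/

section rel
variable {X : Type*} [MetricSpace X] [CompactSpace X]
variable (T : Fin d → X ≃ₜ X) (j : Fin d)

lemma relRT_refl (x : X) : (x, x) ∈ relRT T j :=
  ⟨fun _ => x, const_mem_Q T x, rfl, rfl, fun _ _ _ => rfl⟩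

lemma relRT_closed : IsClosed (relRT T j) := by
  set W : Set ((Fin d → Bool) → X) := cubes T ∩ ⋂ (ε : Fin d → Bool),
      {z | ε j = false → ε ≠ (fun _ => false) → z ε = z (Function.update ε j true)} with hW
  have hWclosed : IsClosed W := by
    refine IsClosed.inter isClosed_closure (isClosed_iInter fun ε => ?_)
    by_cases h1 : ε j = false
    · by_cases h2 : ε = (fun _ => false)
      · have h : {z : (Fin d → Bool) → X | ε j = false → ε ≠ (fun _ => false) →
            z ε = z (Function.update ε j true)} = univ := by
          ext z; simp [h2]
        rw [h]; exact isClosed_univ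
      · have h : {z : (Fin d → Bool) → X | ε j = false → ε ≠ (fun _ => false) →
            z ε = z (Function.update ε j true)}
            = {z | z ε = z (Function.update ε j true)} := by
          ext z; simp [h1, h2]
        rw [h]; exact isClosed_eq (continuous_apply _) (continuous_apply _)
    · have h : {z : (Fin d → Bool) → X | ε j = false → ε ≠ (fun _ => false) →
          z ε = z (Function.update ε j true)} = univ := by
        ext z; simp [h1]
      rw [h]; exact isClosed_univ
  have himg : relRT T j
      = (fun z : (Fin d → Bool) → X => (z (fun _ => false), z (fun i => decide (i = j)))) '' W := by
    ext ⟨a, b⟩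
    constructor
    · rintro ⟨z, hzQ, hz0, hzj, hglue⟩
      refine ⟨z, ⟨hzQ, ?_⟩, ?_⟩
      · exact mem_iInter.mpr fun ε hε hne => hglue ε hε hne
      · simp [hz0, hzj]
    · rintro ⟨z, ⟨hzQ, hglue⟩, heq⟩
      obtain ⟨h1, h2⟩ := Prod.mk.injEq _ _ _ _ ▸ heq
      exact ⟨z, hzQ, h1, h2, fun ε hε hne => (mem_iInter.mp hglue ε) hε hne⟩
  rw [himg]
  have hWcpt : IsCompact W := hWclosed.isCompact
  exact (hWcpt.image ((continuous_apply _).prodMk (continuous_apply _))).isClosed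

variable (hcomm : ∀ i j : Fin d, ∀ x : X, T i (T j x) = T j (T i x))
include hcomm

omit hcomm in
lemma kmap_zero_apply (g : X ≃ₜ X) (z : (Fin d → Bool) → X) (ε : Fin d → Bool) :
    kmap T g 0 z ε = g (z ε) := by
  show (g * ee T (sel ε 0)) (z ε) = g (z ε)
  rw [sel_zero, ee_zero, mul_one]

lemma relRT_inv {g : X ≃ₜ X} (hg : g ∈ genGroup T) {x y : X}
    (h : (x, y) ∈ relRT T j) : (g x, g y) ∈ relRT T j := by
  obtain ⟨z, hzQ, hz0, hzj, hglue⟩ := h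
  refine ⟨kmap T g 0 z, kmap_mem_Q T hcomm hg 0 hzQ, ?_, ?_, ?_⟩
  · rw [kmap_zero_apply, hz0]
  · rw [kmap_zero_apply, hzj]
  · intro ε hε hne
    rw [kmap_zero_apply, kmap_zero_apply, hglue ε hε hne]

/-- the flip map in direction j -/
def flipj (ε : Fin d → Bool) : Fin d → Bool := fun i => if i = j then !(ε i) else ε i

def flipmap : ((Fin d → Bool) → X) → ((Fin d → Bool) → X) := fun z ε => z (flipj j ε)

omit hcomm in
lemma flipmap_cont : Continuous (flipmap (X := X) j) :=
  continuous_pi fun ε => continuous_apply _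

omit hcomm in
lemma sel_flipj (ε : Fin d → Bool) (n : Fin d → ℤ) :
    sel (flipj j ε) n
      = sel ε (Function.update n j (-(n j))) + (fun i => if i = j then n j else 0) := by
  funext i
  by_cases h : i = j
  · subst h
    by_cases hε : ε i <;> simp [sel, flipj, hε, Function.update_self]
  · simp [sel, flipj, h, Function.update_of_ne h]

lemma flipmap_genpt (n : Fin d → ℤ) (x : X) :
    flipmap j (genpt T n x)
      = genpt T (Function.update n j (-(n j))) (ee T (fun i => if i = j then n j else 0) x) := by
  funext ε
  show ee T (sel (flipj j ε) n) x = _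
  rw [sel_flipj j, ee_add T hcomm]
  rfl

lemma flipmap_mem_Q {z : (Fin d → Bool) → X} (hz : z ∈ cubes T) : flipmap j z ∈ cubes T := by
  rw [cubes_eq_closure] at hz ⊢
  have h1 := image_closure_subset_closure_image (flipmap_cont (X := X) j) ⟨z, hz, rfl⟩
  refine closure_mono ?_ h1
  rintro _ ⟨w, ⟨x, n, rfl⟩, rfl⟩
  exact ⟨_, _, flipmap_genpt T j hcomm n x⟩

omit hcomm in
lemma flipj_empty : flipj j (fun _ => false) = fun i => decide (i = j) := by
  funext i; by_cases h : i = j <;> simp [flipj, h]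

omit hcomm in
lemma flipj_sj : flipj j (fun i => decide (i = j)) = fun _ => false := by
  funext i; by_cases h : i = j <;> simp [flipj, h]

omit hcomm in
lemma flipj_low {ε : Fin d → Bool} (hε : ε j = false) :
    flipj j ε = Function.update ε j true := by
  funext i; by_cases h : i = j
  · subst h; simp [flipj, hε]
  · simp [flipj, h, Function.update_of_ne h]

omit hcomm in
lemma flipj_up {ε : Fin d → Bool} (hε : ε j = false) :
    flipj j (Function.update ε j true) = ε := by
  funext i; by_cases h : i = j
  · subst h; simp [flipj, hε]
  · simp [flipj, h, Function.update_of_ne h]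

lemma relRT_symm {x y : X} (h : (x, y) ∈ relRT T j) : (y, x) ∈ relRT T j := by
  obtain ⟨z, hzQ, hz0, hzj, hglue⟩ := h
  refine ⟨flipmap j z, flipmap_mem_Q T j hcomm hzQ, ?_, ?_, ?_⟩
  · show z (flipj j (fun _ => false)) = y
    rw [flipj_empty, hzj]
  · show z (flipj j (fun i => decide (i = j))) = x
    rw [flipj_sj, hz0]
  · intro ε hε hne
    show z (flipj j ε) = z (flipj j (Function.update ε j true))
    rw [flipj_low j hε, flipj_up j hε]
    exact (hglue ε hε hne).symm

variable (hmin : IsMinimalSystem T) (hdist : IsDistalSystem T)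
include hmin hdist

lemma relRT_trans {x y w : X} (hxy : (x, y) ∈ relRT T j) (hyw : (y, w) ∈ relRT T j) :
    (x, w) ∈ relRT T j := by
  have hfam2 := famK2 T hcomm hdist
  obtain ⟨u, huE, huLow, huUp, huSj⟩ := C3 T j hcomm hmin hdist hyw
  obtain ⟨u2, hu2E, hu2Low, hu2Up, hu2Sj⟩ :=
    C3 T j hcomm hmin hdist (relRT_symm T j hcomm hxy)
  obtain ⟨u3, hu3E, hI1, hI2⟩ := hfam2.exists_inv hu2E
  set m := u ∘ u3 with hmdef
  have hmE : m ∈ closure (K2 T) := hfam2.comp_mem_closure huE hu3E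
  have hu3fix : ∀ (ε : Fin d → Bool) (ξ : X), pc u2 ε ξ = ξ → pc u3 ε ξ = ξ := by
    intro ε ξ hfix
    have h2 : pc (u3 ∘ u2) ε ξ = ξ := by rw [hI1]; rfl
    rw [pc_comp T hu3E ε ξ, hfix] at h2
    exact h2
  have hu3sj : pc u3 (fun i => decide (i = j)) x = y := by
    have h2 : pc (u3 ∘ u2) (fun i => decide (i = j)) y = y := by rw [hI1]; rfl
    rw [pc_comp T hu3E _ y, hu2Sj] at h2
    exact h2
  have hm_pc : ∀ ε ξ, pc m ε ξ = pc u ε (pc u3 ε ξ) := fun ε ξ => pc_comp T huE ε ξ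
  have hmlow : ∀ (ε : Fin d → Bool), ε j = false → ∀ ξ, pc m ε ξ = ξ := by
    intro ε hε ξ
    rw [hm_pc, hu3fix ε ξ (hu2Low ε hε ξ), huLow ε hε ξ]
  set ξ1 := u2 (fun _ => y) with hξ1
  have hξ1Q : ξ1 ∈ cubes T := E2_preserves_Q T hcomm hu2E (const_mem_Q T y)
  have hξ1coord : ∀ ε, ξ1 ε = pc u2 ε y := fun ε => coordwise T hu2E _ ε
  set ξ2 := updub j ξ1 with hξ2
  have hξ2Q : ξ2 ∈ cubes T := updub_mem_Q T j hcomm hξ1Q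
  have hξ2coord : ∀ ε, ξ2 ε = pc u2 (Function.update ε j true) y := fun ε => hξ1coord _
  set ζ := m ξ2 with hζ
  have hζQ : ζ ∈ cubes T := E2_preserves_Q T hcomm hmE hξ2Q
  have hζcoord : ∀ ε, ζ ε = pc m ε (ξ2 ε) := fun ε => coordwise T hmE ξ2 ε
  refine ⟨ζ, hζQ, ?_, ?_, ?_⟩
  · rw [hζcoord]
    have h1 : ξ2 (fun _ => false) = x := by
      rw [hξ2coord, update_empty_true j, hu2Sj]
    rw [h1]
    exact hmlow _ rfl x
  · rw [hζcoord]
    have h1 : ξ2 (fun i => decide (i = j)) = x := by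
      rw [hξ2coord, update_sj_true j, hu2Sj]
    rw [h1, hm_pc, hu3sj, huSj]
  · intro ε hε hne
    have hupne : Function.update ε j true ≠ (fun i => decide (i = j)) :=
      update_true_ne_sj j hε hne
    have hupj : (Function.update ε j true) j = true := Function.update_self _ _ _
    have hζε : ζ ε = y := by
      rw [hζcoord, hξ2coord, hu2Up _ hupj hupne]
      exact hmlow ε hε y
    have hζε' : ζ (Function.update ε j true) = y := by
      rw [hζcoord, hξ2coord, Function.update_idem, hu2Up _ hupj hupne, hm_pc,
        hu3fix _ y (hu2Up _ hupj hupne)]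
      exact huUp _ hupj hupne
    rw [hζε, hζε']

end rel

end RelRPProof

/-- **Theorem `EquivRel`.**  For a minimal distal `ℤ^d`-system, `R_{T₁,…,T_d}(X)` is a
closed equivalence relation on `X`, invariant under `g × g` for every `g ∈ G`. -/
theorem relRP_closed_invariant_equivalence {X : Type*} [MetricSpace X] [CompactSpace X]
    {d : ℕ} (T : Fin d → X ≃ₜ X)
    (hcomm : ∀ i j : Fin d, ∀ x : X, T i (T j x) = T j (T i x))
    (hmin : IsMinimalSystem T) (hdist : IsDistalSystem T) :
    IsClosed (relRP T) ∧
      Equivalence (fun x y : X => (x, y) ∈ relRP T) ∧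
      ∀ g ∈ genGroup T, ∀ x y : X, (x, y) ∈ relRP T → (g x, g y) ∈ relRP T := by
  refine ⟨?_, ⟨?_, ?_, ?_⟩, ?_⟩
  · exact isClosed_iInter fun j => RelRPProof.relRT_closed T j
  · intro x
    exact Set.mem_iInter.mpr fun j => RelRPProof.relRT_refl T j x
  · intro x y h
    exact Set.mem_iInter.mpr fun j =>
      RelRPProof.relRT_symm T j hcomm (Set.mem_iInter.mp h j)
  · intro x y w h1 h2
    exact Set.mem_iInter.mpr fun j =>
      RelRPProof.relRT_trans T j hcomm hmin hdist
        (Set.mem_iInter.mp h1 j) (Set.mem_iInter.mp h2 j)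
  · intro g hg x y h
    exact Set.mem_iInter.mpr fun j =>
      RelRPProof.relRT_inv T j hcomm hg (Set.mem_iInter.mp h j)
end

section
/- Let (X,T₁,…,T_d) be a minimal distal ℤ^d-system and let H be a subgroup of G. Then Q_H(X) is a closed equivalence relation on X which is invariant under g × g for every g ∈ G. -/
open Function Set

variable {d : ℕ}

/-- The relation `Q_H(X)`: the closure of `{(x, hx) : x ∈ X, h ∈ H}`. -/
def QH {X : Type*} [TopologicalSpace X] (H : Subgroup (X ≃ₜ X)) : Set (X × X) :=
  closure {p : X × X | ∃ x : X, ∃ h ∈ H, p = (x, h x)}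

/-
The pairs `(x, h x)` form the orbit of a diagonal point `(x₀, x₀)` under the action
`(g, h) · (y, z) = (g y, h g z)` of `G × H` on `X × X`, so by minimality `Q_H(X)` is the image of
`(x₀, x₀)` under the enveloping semigroup `E` of this action (a semigroup because `H` commutes
with `G`). Elements of `E` are pointwise limits of product maps, hence product maps `p × q`;
distality makes them injective, so by Ellis' idempotent lemma `E` is a group. Transitivity follows:
if `A = A₁ × A₂` and `B = B₁ × B₂` send `(x₀, x₀)` to `(a, b)` and `(b, c)`, then
`D = B₁ × B₁ ∈ E` and `B ∘ D⁻¹ ∘ A` sends `(x₀, x₀)` to `(a, B₂ B₁⁻¹ b) = (a, c)`.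
-/

section Ellis

variable {Z : Type*}

def IsDistal [MetricSpace Z] (K : Set (Z → Z)) : Prop :=
  ∀ z z' : Z, z ≠ z' → ∃ δ > 0, ∀ k ∈ K, δ ≤ dist (k z) (k z')

variable {K : Set (Z → Z)}

theorem comp_mem_closure [TopologicalSpace Z] (hcont : ∀ k ∈ K, Continuous k)
    (hcomp : ∀ k ∈ K, ∀ k' ∈ K, k ∘ k' ∈ K) {p q : Z → Z}
    (hp : p ∈ closure K) (hq : q ∈ closure K) : p ∘ q ∈ closure K := by
  have hKq : ∀ k ∈ K, k ∘ q ∈ closure K := fun k hk =>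
    map_mem_closure (continuous_pi fun z => (hcont k hk).comp (continuous_apply z)) hq
      fun k' hk' => hcomp k hk k' hk'
  exact MapsTo.closure_left (f := (· ∘ q)) hKq
    (continuous_pi fun z => continuous_apply (q z)) isClosed_closure hp

theorem IsDistal.injective_of_mem_closure [MetricSpace Z] (hK : IsDistal K) {u : Z → Z}
    (hu : u ∈ closure K) : Injective u := by
  intro z z' huz
  by_contra hne
  obtain ⟨δ, hδ, hsep⟩ := hK z z' hne
  have hclosed : IsClosed {F : Z → Z | δ ≤ dist (F z) (F z')} :=
    isClosed_le continuous_const ((continuous_apply z).dist (continuous_apply z'))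
  have : δ ≤ dist (u z) (u z') := closure_minimal hsep hclosed hu
  rw [huz, dist_self] at this
  exact hδ.not_ge this

theorem IsDistal.exists_comp_eq_id [MetricSpace Z] [CompactSpace Z] (hK : IsDistal K)
    (hcont : ∀ k ∈ K, Continuous k) (hcomp : ∀ k ∈ K, ∀ k' ∈ K, k ∘ k' ∈ K) {p : Z → Z}
    (hp : p ∈ closure K) : ∃ q ∈ closure K, q ∘ p = id := by
  -- `Function.End Z` is `Z → Z` with composition as multiplication.
  let : TopologicalSpace (Function.End Z) := Pi.topologicalSpace
  have : T2Space (Function.End Z) := inferInstanceAs (T2Space (Z → Z))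
  obtain ⟨_, ⟨q, hq, rfl⟩, hidem⟩ := exists_idempotent_in_compact_subsemigroup
    (M := Function.End Z) (fun r => continuous_pi fun z => continuous_apply (r z))
    ((· ∘ p) '' closure K) ⟨p ∘ p, p, hp, rfl⟩
    (isClosed_closure.isCompact.image (continuous_pi fun z => continuous_apply (p z)))
    (by
      rintro _ ⟨a, ha, rfl⟩ _ ⟨b, hb, rfl⟩
      exact ⟨a ∘ p ∘ b, comp_mem_closure hcont hcomp ha (comp_mem_closure hcont hcomp hp hb),
        rfl⟩)
  refine ⟨q, hq, funext fun z => hK.injective_of_mem_closure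
    (comp_mem_closure hcont hcomp hq hp) (congrFun hidem z)⟩

theorem IsDistal.exists_inverse [MetricSpace Z] [CompactSpace Z] (hK : IsDistal K)
    (hcont : ∀ k ∈ K, Continuous k) (hcomp : ∀ k ∈ K, ∀ k' ∈ K, k ∘ k' ∈ K) {p : Z → Z}
    (hp : p ∈ closure K) : ∃ q ∈ closure K, q ∘ p = id ∧ p ∘ q = id := by
  obtain ⟨q, hq, hqp⟩ := hK.exists_comp_eq_id hcont hcomp hp
  obtain ⟨r, -, hrq⟩ := hK.exists_comp_eq_id hcont hcomp hq
  have hrp : r = p := by rw [← comp_id r, ← hqp, ← comp_assoc, hrq, id_comp]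
  exact ⟨q, hq, hqp, hrp ▸ hrq⟩

end Ellis

section QH

variable {X : Type*} [TopologicalSpace X] {H : Subgroup (X ≃ₜ X)}

theorem QH_refl (x : X) : (x, x) ∈ QH H :=
  subset_closure ⟨x, 1, one_mem H, rfl⟩

theorem QH_symm {x y : X} (hxy : (x, y) ∈ QH H) : (y, x) ∈ QH H := by
  refine closure_minimal (s := {p | ∃ x, ∃ h ∈ H, p = (x, h x)}) ?_
    (isClosed_closure.preimage continuous_swap) hxy
  rintro _ ⟨u, h, hh, rfl⟩
  exact subset_closure ⟨h u, h⁻¹, inv_mem hh, Prod.ext rfl (h.symm_apply_apply u).symm⟩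

theorem map_mem_QH {g : X ≃ₜ X} (hg : g ∈ Subgroup.centralizer H) {x y : X}
    (hxy : (x, y) ∈ QH H) : (g x, g y) ∈ QH H := by
  refine closure_minimal (s := {p | ∃ x, ∃ h ∈ H, p = (x, h x)}) ?_
    (isClosed_closure.preimage (g.continuous.prodMap g.continuous)) hxy
  rintro _ ⟨u, h, hh, rfl⟩
  exact subset_closure ⟨g u, h, hh, Prod.ext rfl (DFunLike.congr_fun (hg h hh) u).symm⟩

end QH

section PairMaps

variable {X : Type*}

def pairMaps [TopologicalSpace X] (G H : Subgroup (X ≃ₜ X)) : Set (X × X → X × X) :=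
  {F | ∃ g ∈ G, ∃ h ∈ H, F = Prod.map g (h * g)}

variable [MetricSpace X] {G H : Subgroup (X ≃ₜ X)}

theorem continuous_of_mem_pairMaps {F : X × X → X × X} (hF : F ∈ pairMaps G H) :
    Continuous F := by
  obtain ⟨g, -, h, -, rfl⟩ := hF
  exact g.continuous.prodMap (h * g).continuous

theorem comp_mem_pairMaps (hHG : H ≤ Subgroup.centralizer G) {F F' : X × X → X × X}
    (hF : F ∈ pairMaps G H) (hF' : F' ∈ pairMaps G H) : F ∘ F' ∈ pairMaps G H := by
  obtain ⟨g, hg, h, hh, rfl⟩ := hF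
  obtain ⟨g', hg', h', hh', rfl⟩ := hF'
  refine ⟨g * g', mul_mem hg hg', h * h', mul_mem hh hh', ?_⟩
  have hcomm : h * g * (h' * g') = h * h' * (g * g') := by
    rw [mul_assoc, ← mul_assoc g, hHG hh' g hg]; group
  rw [Prod.map_comp_map, ← hcomm]
  rfl

theorem isDistal_pairMaps
    (hdist : ∀ x y : X, x ≠ y → ∃ δ > 0, ∀ g ∈ G, δ ≤ dist (g x) (g y)) (hH : H ≤ G) :
    IsDistal (pairMaps G H) := by
  intro z z' hne
  obtain hne₁ | hne₂ : z.1 ≠ z'.1 ∨ z.2 ≠ z'.2 := by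
    by_contra! h; exact hne (Prod.ext h.1 h.2)
  · obtain ⟨δ, hδ, hsep⟩ := hdist _ _ hne₁
    refine ⟨δ, hδ, ?_⟩
    rintro _ ⟨g, hg, h, -, rfl⟩
    exact (hsep g hg).trans (le_max_left _ _)
  · obtain ⟨δ, hδ, hsep⟩ := hdist _ _ hne₂
    refine ⟨δ, hδ, ?_⟩
    rintro _ ⟨g, hg, h, hh, rfl⟩
    exact (hsep _ (mul_mem (hH hh) hg)).trans (le_max_right _ _)

theorem exists_eq_prodMap_of_mem_closure_pairMaps [CompactSpace X] {F : X × X → X × X}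
    (hF : F ∈ closure (pairMaps G H)) : ∃ p q : X → X, F = Prod.map p q := by
  have hclosed : IsClosed (range fun pq : (X → X) × (X → X) => Prod.map pq.1 pq.2) :=
    (isCompact_range (continuous_pi fun z =>
      ((continuous_apply z.1).comp continuous_fst).prodMk
        ((continuous_apply z.2).comp continuous_snd))).isClosed
  obtain ⟨⟨p, q⟩, rfl⟩ := closure_minimal
    (by rintro _ ⟨g, -, h, -, rfl⟩; exact ⟨(g, h * g), rfl⟩) hclosed hF
  exact ⟨p, q, rfl⟩

theorem prodMap_fst_mem_closure_pairMaps {p q : X → X}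
    (hpq : Prod.map p q ∈ closure (pairMaps G H)) : Prod.map p p ∈ closure (pairMaps G H) := by
  have hcont : Continuous fun F : X × X → X × X =>
      Prod.map (fun x => (F (x, x)).1) (fun x => (F (x, x)).1) :=
    continuous_pi fun z =>
      ((continuous_apply (z.1, z.1)).fst).prodMk ((continuous_apply (z.2, z.2)).fst)
  apply map_mem_closure hcont hpq
  rintro _ ⟨g, hg, h, -, rfl⟩
  exact ⟨g, hg, 1, one_mem H, rfl⟩

theorem QH_eq_image_closure_pairMaps [CompactSpace X]
    (hmin : ∀ x : X, Dense {y : X | ∃ g ∈ G, g x = y}) (x : X) :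
    QH H = (fun F : X × X → X × X => F (x, x)) '' closure (pairMaps G H) := by
  have hclosed : IsClosed ((fun F : X × X → X × X => F (x, x)) '' closure (pairMaps G H)) :=
    (isClosed_closure.isCompact.image (continuous_apply (x, x))).isClosed
  apply Subset.antisymm
  · refine closure_minimal ?_ hclosed
    rintro _ ⟨y, h, hh, rfl⟩
    refine MapsTo.closure_left (f := fun y => (y, h y)) ?_
      (continuous_id.prodMk h.continuous) hclosed (hmin x y)
    rintro _ ⟨g, hg, rfl⟩
    exact ⟨_, subset_closure ⟨g, hg, h, hh, rfl⟩, rfl⟩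
  · rintro _ ⟨F, hF, rfl⟩
    apply map_mem_closure (continuous_apply (x, x)) hF
    rintro _ ⟨g, -, h, hh, rfl⟩
    exact ⟨g x, h, hh, rfl⟩

theorem QH_trans [CompactSpace X] (hmin : ∀ x : X, Dense {y : X | ∃ g ∈ G, g x = y})
    (hdist : ∀ x y : X, x ≠ y → ∃ δ > 0, ∀ g ∈ G, δ ≤ dist (g x) (g y))
    (hH : H ≤ G) (hHG : H ≤ Subgroup.centralizer G) {a b c : X}
    (hab : (a, b) ∈ QH H) (hbc : (b, c) ∈ QH H) : (a, c) ∈ QH H := by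
  have hcont : ∀ F ∈ pairMaps G H, Continuous F := fun _ => continuous_of_mem_pairMaps
  have hcomp : ∀ F ∈ pairMaps G H, ∀ F' ∈ pairMaps G H, F ∘ F' ∈ pairMaps G H :=
    fun _ hF _ hF' => comp_mem_pairMaps hHG hF hF'
  have hK := isDistal_pairMaps hdist hH
  rw [QH_eq_image_closure_pairMaps hmin a] at hab hbc ⊢
  obtain ⟨_, hA, hAa⟩ := hab
  obtain ⟨A₁, A₂, rfl⟩ := exists_eq_prodMap_of_mem_closure_pairMaps hA
  obtain ⟨_, hB, hBa⟩ := hbc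
  obtain ⟨B₁, B₂, rfl⟩ := exists_eq_prodMap_of_mem_closure_pairMaps hB
  obtain ⟨D, hD, hDB, hBD⟩ := hK.exists_inverse hcont hcomp (prodMap_fst_mem_closure_pairMaps hB)
  obtain ⟨q, q', rfl⟩ := exists_eq_prodMap_of_mem_closure_pairMaps hD
  have hq : B₁ (q a) = a := congrArg Prod.fst (congrFun hBD (a, a))
  have hq' : q' (B₁ a) = a := congrArg Prod.snd (congrFun hDB (a, a))
  simp only [Prod.map_apply, Prod.mk.injEq] at hAa hBa
  refine ⟨_, comp_mem_closure hcont hcomp hB (comp_mem_closure hcont hcomp hD hA), ?_⟩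
  simp only [comp_apply, Prod.map_apply, hAa.1, hAa.2, ← hBa.1, hq, hq', hBa.2]

end PairMaps

/-- **Proposition `cube3`.**  For a minimal distal `ℤ^d`-system and a subgroup `H` of `G`,
`Q_H(X)` is a closed equivalence relation on `X`, invariant under `g × g` for `g ∈ G`. -/
theorem QH_closed_invariant_equivalence {X : Type*} [MetricSpace X] [CompactSpace X]
    {d : ℕ} (T : Fin d → X ≃ₜ X)
    (hcomm : ∀ i j : Fin d, ∀ x : X, T i (T j x) = T j (T i x))
    (hmin : IsMinimalSystem T) (hdist : IsDistalSystem T)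
    (H : Subgroup (X ≃ₜ X)) (hH : H ≤ genGroup T) :
    IsClosed (QH H) ∧
      Equivalence (fun x y : X => (x, y) ∈ QH H) ∧
      ∀ g ∈ genGroup T, ∀ x y : X, (x, y) ∈ QH H → (g x, g y) ∈ QH H := by
  have : IsMulCommutative (genGroup T) := Subgroup.isMulCommutative_closure <| by
    rintro _ ⟨i, rfl⟩ _ ⟨j, rfl⟩
    exact Homeomorph.ext (hcomm i j)
  have hHG : H ≤ Subgroup.centralizer (genGroup T) := hH.trans (Subgroup.le_centralizer _)
  exact ⟨isClosed_closure, ⟨QH_refl, QH_symm, QH_trans hmin hdist hH hHG⟩,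
    fun g hg _ _ => map_mem_QH (Subgroup.le_centralizer_iff.mp hHG hg)⟩
end
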